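/- arXiv:math/9904008 — 3 statements merged into one kernel-verified Lean document; each statement's English description precedes it below -/
import Mathlib

section
/- Let p be prime, n ≥ 3, f ∈ Z_p[x_1,...,x_n] homogeneous of degree d with Z_f ⊂ P^{n-1} smooth over Z_p, and a ∈ Z_p^n with a ∉ pZ_p^n, defining the hyperplane H_a. Let Z_{f,a} = Z_f ∩ H_a, and write Z^t_{f,a} (resp. Z^{nt}_{f,a}) for the F_p-points where the intersection is transverse (resp. not transverse). Then for all α ≥ 1: #Z_{f,a}(Z/p^α Z) ≤ p^{(n-3)(α-1)} · #Z^t_{f,a}(F_p) + p^{(n-2)(α-1)} · #Z^{nt}_{f,a}(F_p). -/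
open MvPolynomial

/-- Number of points of the projective scheme cut out in `ℙ^{n-1}_R` by the condition `P`:
primitive vectors in `Rⁿ` satisfying `P`, up to multiplication by a unit of `R`. -/
noncomputable def projCard {n : ℕ} (R : Type*) [CommRing R] (P : (Fin n → R) → Prop) : ℕ :=
  Nat.card (Quot (fun x y : {x : Fin n → R // (∃ i, IsUnit (x i)) ∧ P x} =>
    ∃ u : Rˣ, ∀ i, y.1 i = (u : R) * x.1 i))

open Finset

section Helpers

variable {n : ℕ}

/-- Taylor expansion to first order, with divisibility control on the remainder. -/
lemma taylor_dvd (f : MvPolynomial (Fin n) ℤ) (m : ℤ) (A B : Fin n → ℤ)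
    (hB : ∀ k, m ∣ B k) :
    m ^ 2 ∣ eval (A + B) f - eval A f - ∑ k, B k * eval A (pderiv k f) := by
  induction f using MvPolynomial.induction_on with
  | C a => simp
  | add p q hp hq =>
      have : eval (A + B) (p + q) - eval A (p + q)
          - ∑ k, B k * eval A (pderiv k (p + q))
          = (eval (A + B) p - eval A p - ∑ k, B k * eval A (pderiv k p))
            + (eval (A + B) q - eval A q - ∑ k, B k * eval A (pderiv k q)) := by
        simp only [map_add, eval_add, mul_add, Finset.sum_add_distrib]
        ring
      rw [this]; exact dvd_add hp hq
  | mul_X p i hp =>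
      have hS : m ∣ ∑ k, B k * eval A (pderiv k p) :=
        Finset.dvd_sum fun k _ => (hB k).mul_right _
      have hd : ∀ k, eval A (pderiv k (p * X i))
          = eval A (pderiv k p) * A i + (if i = k then eval A p else 0) := by
        intro k
        rw [pderiv_mul, map_add, eval_mul, eval_X, pderiv_X, Pi.single_apply]
        split <;> simp
      have hsum : ∑ k, B k * eval A (pderiv k (p * X i))
          = A i * (∑ k, B k * eval A (pderiv k p)) + B i * eval A p := by
        simp only [hd, mul_add, mul_ite, mul_zero]
        rw [Finset.sum_add_distrib, Finset.sum_ite_eq Finset.univ i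
          (fun k => B k * eval A p)]
        simp [Finset.mul_sum]
        exact Finset.sum_congr rfl fun k _ => by ring
      have key : eval (A + B) (p * X i) - eval A (p * X i)
          - ∑ k, B k * eval A (pderiv k (p * X i))
          = A i * (eval (A + B) p - eval A p - ∑ k, B k * eval A (pderiv k p))
            + B i * (eval (A + B) p - eval A p - ∑ k, B k * eval A (pderiv k p))
            + B i * (∑ k, B k * eval A (pderiv k p)) := by
        rw [hsum]; simp only [eval_mul, eval_X, Pi.add_apply]; ring
      rw [key]
      refine dvd_add (dvd_add (hp.mul_left _) (hp.mul_left _)) ?_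
      rw [sq]
      exact mul_dvd_mul (hB i) hS

lemma weight_one_eq_sum (m : Fin n →₀ ℕ) : (Finsupp.weight 1) m = ∑ i, m i := by
  rw [Pi.one_def, ← Finsupp.degree_eq_weight_one (R := ℕ)]
  exact Finset.sum_subset (Finset.subset_univ _)
    (fun i _ hi => Finsupp.notMem_support_iff.mp hi)

lemma eval_unit_mul {R : Type*} [CommRing R] {d : ℕ} (g : MvPolynomial (Fin n) R)
    (hg : g.IsHomogeneous d) (u : R) (x : Fin n → R) :
    eval (fun i => u * x i) g = u ^ d * eval x g := by
  rw [eval_eq', eval_eq', Finset.mul_sum]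
  refine Finset.sum_congr rfl fun m hm => ?_
  have hdeg : ∑ i, m i = d := by
    rw [← weight_one_eq_sum]; exact hg (mem_support_iff.mp hm)
  calc coeff m g * ∏ i, (u * x i) ^ m i
      = coeff m g * ((∏ i, u ^ m i) * ∏ i, x i ^ m i) := by
        rw [← Finset.prod_mul_distrib]; simp [mul_pow]
    _ = u ^ d * (coeff m g * ∏ i, x i ^ m i) := by
        rw [Finset.prod_pow_eq_pow_sum, hdeg]; ring

lemma isHomogeneous_pderiv {d : ℕ} {g : MvPolynomial (Fin n) ℤ} (hg : g.IsHomogeneous d)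
    (i : Fin n) : (pderiv i g).IsHomogeneous (d - 1) := by
  rw [g.as_sum, map_sum]
  refine IsHomogeneous.sum _ _ _ fun m hm => ?_
  rw [pderiv_monomial]
  by_cases h : m i = 0
  · simp only [h, Nat.cast_zero, mul_zero]
    rw [MvPolynomial.monomial_zero]
    exact isHomogeneous_zero _ _ _
  · refine isHomogeneous_monomial _ ?_
    have hdeg : (Finsupp.weight 1) m = d := hg (mem_support_iff.mp hm)
    have hm' : (m - Finsupp.single i 1) + Finsupp.single i 1 = m := by
      ext j
      simp only [Finsupp.add_apply, Finsupp.tsub_apply, Finsupp.single_apply]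
      by_cases hj : i = j
      · subst hj; simp; omega
      · simp [hj]
    have h2 : (Finsupp.weight 1) (m - Finsupp.single i 1) + 1 = d := by
      have := congrArg (Finsupp.weight (1 : Fin n → ℕ)) hm'
      rw [map_add] at this
      have hs : (Finsupp.weight (1 : Fin n → ℕ)) (Finsupp.single i 1) = 1 := by
        simp [Finsupp.weight_apply, Finsupp.sum_single_index]
      rw [hs] at this
      rw [this, hdeg]
    rw [Finsupp.degree_eq_weight_one]
    rw [Pi.one_def] at h2
    omega

lemma eval_int_cast {R : Type*} [CommRing R] (f : MvPolynomial (Fin n) ℤ) (A : Fin n → ℤ) :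
    ((eval A f : ℤ) : R) = eval (fun k => ((A k : ℤ) : R)) (map (Int.castRingHom R) f) := by
  rw [eval_map]
  have : (Int.castRingHom R) (eval₂ (RingHom.id ℤ) A f)
      = eval₂ ((Int.castRingHom R).comp (RingHom.id ℤ)) ((Int.castRingHom R) ∘ A) f :=
    eval₂_comp_left _ _ _ _
  simpa [Function.comp_def] using this

lemma map_eval_map {R S : Type*} [CommRing R] [CommRing S] (π : R →+* S)
    (f : MvPolynomial (Fin n) ℤ) (x : Fin n → R) :
    π (eval x (map (Int.castRingHom R) f))
      = eval (fun i => π (x i)) (map (Int.castRingHom S) f) := by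
  rw [eval_map, eval_map]
  rw [eval₂_comp_left π (Int.castRingHom R) x f]
  congr 1
  exact RingHom.ext fun z => by simp

lemma isUnit_int_cast_zmod_pow (p : ℕ) (hp : p.Prime) (α : ℕ) (z : ℤ)
    (hz : ¬ (p : ℤ) ∣ z) : IsUnit ((z : ℤ) : ZMod (p ^ α)) := by
  have hpz : Prime (p : ℤ) := Nat.prime_iff_prime_int.mp hp
  have hcop : IsCoprime ((p : ℤ) ^ α) z := ((hpz.coprime_iff_not_dvd).mpr hz).pow_left
  obtain ⟨u, v, huv⟩ := hcop
  have h0 : ((p : ℤ) ^ α : ℤ) = ((p ^ α : ℕ) : ℤ) := by push_cast; ring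
  rw [h0] at huv
  have h1 := congrArg (Int.castRingHom (ZMod (p ^ α))) huv
  rw [map_add, map_mul, map_mul, map_one] at h1
  have h2 : (Int.castRingHom (ZMod (p ^ α))) ((p ^ α : ℕ) : ℤ) = 0 := by
    show (((p ^ α : ℕ) : ℤ) : ZMod (p ^ α)) = 0
    rw [Int.cast_natCast, ZMod.natCast_self]
  rw [h2, mul_zero, zero_add] at h1
  exact IsUnit.of_mul_eq_one _ (mul_comm ((Int.castRingHom (ZMod (p ^ α))) v) _ ▸ h1)

lemma card_fiber (p : ℕ) (hp : p.Prime) (α : ℕ) (hα : 1 ≤ α) (c : ZMod p) :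
    haveI : NeZero (p ^ α) := ⟨pow_ne_zero _ hp.ne_zero⟩
    Nat.card {y : ZMod (p ^ α) //
      ZMod.castHom (dvd_pow_self p (Nat.one_le_iff_ne_zero.mp hα)) (ZMod p) y = c}
      = p ^ (α - 1) := by
  haveI : NeZero p := ⟨hp.ne_zero⟩
  haveI : NeZero (p ^ α) := ⟨pow_ne_zero _ hp.ne_zero⟩
  set π := ZMod.castHom (dvd_pow_self p (Nat.one_le_iff_ne_zero.mp hα)) (ZMod p) with hπ
  have key : ∀ b : ZMod p, Nat.card {y // π y = b} = Nat.card {y // π y = 0} := by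
    intro b
    have hy₀ : π ((b.val : ℕ) : ZMod (p ^ α)) = b := by
      rw [map_natCast]
      simp [ZMod.natCast_val, ZMod.cast_id]
    refine Nat.card_congr ⟨fun y => ⟨y.1 - ((b.val : ℕ) : ZMod (p ^ α)), by
        rw [map_sub, y.2, hy₀, sub_self]⟩,
      fun z => ⟨z.1 + ((b.val : ℕ) : ZMod (p ^ α)), by rw [map_add, z.2, hy₀, zero_add]⟩,
      fun y => by simp, fun z => by simp⟩
  have h1 : p ^ α = ∑ b : ZMod p, Nat.card {y // π y = b} := by
    calc p ^ α = Nat.card (ZMod (p ^ α)) := by rw [Nat.card_eq_fintype_card, ZMod.card]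
      _ = Nat.card (Σ b : ZMod p, {y // π y = b}) :=
        Nat.card_congr (Equiv.sigmaFiberEquiv π).symm
      _ = ∑ b : ZMod p, Nat.card {y // π y = b} := by
        rw [Nat.card_eq_fintype_card, Fintype.card_sigma]
        exact Finset.sum_congr rfl fun b _ => (Nat.card_eq_fintype_card).symm
  rw [Finset.sum_congr rfl (fun b _ => key b), Finset.sum_const, card_univ, ZMod.card,
    smul_eq_mul] at h1
  have h2 : p * Nat.card {y // π y = 0} = p * p ^ (α - 1) := by
    rw [← h1]
    rw [← pow_succ']
    congr 1
    omega
  rw [key c, Nat.eq_of_mul_eq_mul_left hp.pos h2]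

lemma card_pi_fiber (p : ℕ) (hp : p.Prime) (α : ℕ) (hα : 1 ≤ α) {m : ℕ}
    (κ : Type*) [Fintype κ] (hκ : Fintype.card κ = m) (c : κ → ZMod p) :
    Nat.card (∀ k : κ, {z : ZMod (p ^ α) //
      ZMod.castHom (dvd_pow_self p (Nat.one_le_iff_ne_zero.mp hα)) (ZMod p) z = c k})
      = p ^ ((α - 1) * m) := by
  haveI : NeZero (p ^ α) := ⟨pow_ne_zero _ hp.ne_zero⟩
  rw [Nat.card_pi]
  rw [Finset.prod_congr rfl (fun k _ => card_fiber p hp α hα (c k)), Finset.prod_const,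
    card_univ, hκ, ← pow_mul]

lemma card_le_split {X Y : Type*} [Finite X] [Fintype Y] (g : X → Y) (Q : Y → Prop)
    [DecidablePred Q] (c₁ c₂ : ℕ)
    (h1 : ∀ y, Q y → Nat.card {x // g x = y} ≤ c₁)
    (h2 : ∀ y, ¬ Q y → Nat.card {x // g x = y} ≤ c₂) :
    Nat.card X ≤ c₁ * Nat.card {y // Q y} + c₂ * Nat.card {y // ¬ Q y} := by
  classical
  haveI := Fintype.ofFinite X
  calc Nat.card X = Fintype.card X := Nat.card_eq_fintype_card
    _ = Fintype.card (Σ y : Y, {x // g x = y}) :=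
      (Fintype.card_congr (Equiv.sigmaFiberEquiv g)).symm
    _ = ∑ y : Y, Fintype.card {x // g x = y} := Fintype.card_sigma
    _ ≤ ∑ y : Y, (if Q y then c₁ else c₂) := Finset.sum_le_sum (fun y _ => by
        rw [← Nat.card_eq_fintype_card]
        split_ifs with h
        exacts [h1 y h, h2 y h])
    _ = c₁ * Nat.card {y // Q y} + c₂ * Nat.card {y // ¬ Q y} := by
      rw [Finset.sum_ite, Finset.sum_const, Finset.sum_const, smul_eq_mul, smul_eq_mul,
        Nat.card_eq_fintype_card, Nat.card_eq_fintype_card, Fintype.card_subtype,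
        Fintype.card_subtype]
      ring

lemma exists_minor (p : ℕ) [hpf : Fact p.Prime] (v w : Fin n → ZMod p)
    (i₀ : Fin n) (hw : w i₀ ≠ 0)
    (htrans : ¬ ∃ c : ZMod p, ∀ k, v k = c * w k) :
    ∃ i j, i ≠ j ∧ v i * w j - v j * w i ≠ 0 := by
  by_contra hno
  push_neg at hno
  refine htrans ⟨v i₀ * (w i₀)⁻¹, fun k => ?_⟩
  by_cases hk : k = i₀
  · subst hk
    rw [mul_assoc, inv_mul_cancel₀ hw, mul_one]
  · have h := hno k i₀ hk
    have h' : v k * w i₀ = v i₀ * w k := by linear_combination h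
    calc v k = v k * w i₀ * (w i₀)⁻¹ := by rw [mul_assoc, mul_inv_cancel₀ hw, mul_one]
      _ = v i₀ * w k * (w i₀)⁻¹ := by rw [h']
      _ = v i₀ * (w i₀)⁻¹ * w k := by ring

lemma card_sol (R : Type*) [CommRing R] [Finite R] (P : (Fin n → R) → Prop)
    (hP : ∀ (u : Rˣ) (x : Fin n → R), P x → P (fun i => (u : R) * x i)) :
    Nat.card {x : Fin n → R // (∃ i, IsUnit (x i)) ∧ P x}
      = projCard R P * Nat.card Rˣ := by
  classical
  set Sol := {x : Fin n → R // (∃ i, IsUnit (x i)) ∧ P x} with hSol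
  set r : Sol → Sol → Prop := fun x y => ∃ u : Rˣ, ∀ i, y.1 i = (u : R) * x.1 i with hr
  have hequiv : Equivalence r := by
    constructor
    · exact fun x => ⟨1, by simp⟩
    · rintro x y ⟨u, h⟩
      exact ⟨u⁻¹, fun i => by rw [h i, ← mul_assoc, ← Units.val_mul, inv_mul_cancel,
        Units.val_one, one_mul]⟩
    · rintro x y z ⟨u, h⟩ ⟨v, h'⟩
      exact ⟨v * u, fun i => by rw [h' i, h i, ← mul_assoc, Units.val_mul]⟩
  set m : Quot r × Rˣ → Sol := fun q =>
    ⟨fun i => (q.2 : R) * (Quot.out q.1).1 i, by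
      obtain ⟨⟨i, hi⟩, hp2⟩ := (Quot.out q.1).2
      exact ⟨⟨i, q.2.isUnit.mul hi⟩, hP _ _ hp2⟩⟩ with hm
  have hbij : Function.Bijective m := by
    constructor
    · rintro ⟨q, u⟩ ⟨q', u'⟩ h
      have h' : ∀ i, (u : R) * (Quot.out q).1 i = (u' : R) * (Quot.out q').1 i :=
        fun i => congrFun (congrArg Subtype.val h) i
      have hrel : r (Quot.out q) (Quot.out q') := by
        refine ⟨u'⁻¹ * u, fun i => ?_⟩
        rw [Units.val_mul, mul_assoc, h' i, ← mul_assoc, ← Units.val_mul,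
          inv_mul_cancel, Units.val_one, one_mul]
      have hq : q = q' := by
        rw [← Quot.out_eq q, ← Quot.out_eq q']
        exact Quot.sound hrel
      subst hq
      obtain ⟨i, hi⟩ := (Quot.out q).2.1
      obtain ⟨w, hw⟩ := hi
      have : (u : R) * (w : R) = (u' : R) * (w : R) := by rw [hw]; exact h' i
      have hval : (u : R) = (u' : R) := by
        have := congrArg (fun t => t * ((w⁻¹ : Rˣ) : R)) this
        simpa [mul_assoc, ← Units.val_mul] using this
      exact Prod.ext rfl (Units.ext hval)
    · rintro x
      set q := Quot.mk r x with hq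
      have : Quot.mk r (Quot.out q) = Quot.mk r x := by rw [Quot.out_eq]
      obtain ⟨u, hu⟩ := (hequiv.eqvGen_iff).mp (Quot.eq.mp this)
      exact ⟨(q, u), Subtype.ext (funext fun i => (hu i).symm)⟩
  calc Nat.card Sol = Nat.card (Quot r × Rˣ) := (Nat.card_congr (Equiv.ofBijective m hbij)).symm
    _ = projCard R P * Nat.card Rˣ := by rw [Nat.card_prod]; rfl

end Helpers
section LiftLemmas

lemma lift_lin (p : ℕ) (hp : p.Prime) (α : ℕ) (hα : 1 ≤ α) (n : ℕ) (a : Fin n → ℤ)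
    (i₀ : Fin n) (ha : ¬ (p : ℤ) ∣ a i₀) (y : Fin n → ZMod p)
    (P' : (Fin n → ZMod (p ^ α)) → Prop) :
    Nat.card {x : Fin n → ZMod (p ^ α) //
      (∀ i, ZMod.castHom (dvd_pow_self p (Nat.one_le_iff_ne_zero.mp hα)) (ZMod p) (x i) = y i)
      ∧ P' x ∧ ∑ i, (a i : ZMod (p ^ α)) * x i = 0} ≤ p ^ ((n - 1) * (α - 1)) := by
  classical
  haveI : NeZero (p ^ α) := ⟨pow_ne_zero _ hp.ne_zero⟩
  set π := ZMod.castHom (dvd_pow_self p (Nat.one_le_iff_ne_zero.mp hα)) (ZMod p) with hπ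
  set T := ∀ k : {k : Fin n // k ≠ i₀}, {z : ZMod (p ^ α) // π z = y k.1} with hT
  have hcard : Nat.card T = p ^ ((α - 1) * (n - 1)) := by
    refine card_pi_fiber p hp α hα _ ?_ _
    simp [Fintype.card_subtype_compl]
  have hinj : Function.Injective
      (fun (x : {x : Fin n → ZMod (p ^ α) //
        (∀ i, π (x i) = y i) ∧ P' x ∧ ∑ i, (a i : ZMod (p ^ α)) * x i = 0}) =>
        (fun k : {k : Fin n // k ≠ i₀} => (⟨x.1 k.1, x.2.1 k.1⟩ :
          {z : ZMod (p ^ α) // π z = y k.1}) : T)) := by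
    rintro x x' h
    have hcoord : ∀ k : Fin n, k ≠ i₀ → x.1 k = x'.1 k := by
      intro k hk
      have := congrFun h ⟨k, hk⟩
      exact congrArg Subtype.val this
    have hsum : (a i₀ : ZMod (p ^ α)) * (x.1 i₀ - x'.1 i₀) = 0 := by
      have h0 : ∑ i, ((a i : ZMod (p ^ α)) * x.1 i - (a i : ZMod (p ^ α)) * x'.1 i) = 0 := by
        rw [Finset.sum_sub_distrib, x.2.2.2, x'.2.2.2, sub_self]
      rw [Finset.sum_eq_single i₀ (fun i _ hi => by rw [hcoord i hi, sub_self])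
        (fun hmem => absurd (Finset.mem_univ i₀) hmem)] at h0
      rw [mul_sub]
      exact h0
    have hu : IsUnit ((a i₀ : ℤ) : ZMod (p ^ α)) := isUnit_int_cast_zmod_pow p hp α _ ha
    have : x.1 i₀ = x'.1 i₀ := by
      obtain ⟨u, hu'⟩ := hu
      rw [← hu'] at hsum
      exact sub_eq_zero.mp ((Units.mul_right_eq_zero u).mp hsum)
    refine Subtype.ext (funext fun k => ?_)
    by_cases hk : k = i₀
    · subst hk; exact this
    · exact hcoord k hk
  calc Nat.card _ ≤ Nat.card T := Nat.card_le_card_of_injective _ hinj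
    _ = p ^ ((α - 1) * (n - 1)) := hcard
    _ = p ^ ((n - 1) * (α - 1)) := by rw [Nat.mul_comm]

lemma lift_trans (p : ℕ) [hpf : Fact p.Prime] (α : ℕ) (hα : 1 ≤ α) (n : ℕ)
    (f : MvPolynomial (Fin n) ℤ) (a : Fin n → ℤ) (y : Fin n → ZMod p)
    (i j : Fin n) (hij : i ≠ j)
    (hδ : eval y (pderiv i (map (Int.castRingHom (ZMod p)) f)) * (a j : ZMod p)
        - eval y (pderiv j (map (Int.castRingHom (ZMod p)) f)) * (a i : ZMod p) ≠ 0) :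
    Nat.card {x : Fin n → ZMod (p ^ α) //
      (∀ k, ZMod.castHom (dvd_pow_self p (Nat.one_le_iff_ne_zero.mp hα)) (ZMod p) (x k) = y k)
      ∧ eval x (map (Int.castRingHom (ZMod (p ^ α))) f) = 0
      ∧ ∑ k, (a k : ZMod (p ^ α)) * x k = 0} ≤ p ^ ((n - 2) * (α - 1)) := by
  classical
  have hp : p.Prime := hpf.out
  have hpz : ((p : ℤ)) ≠ 0 := Int.natCast_ne_zero.mpr hp.ne_zero
  haveI : NeZero (p ^ α) := ⟨pow_ne_zero _ hp.ne_zero⟩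
  set π := ZMod.castHom (dvd_pow_self p (Nat.one_le_iff_ne_zero.mp hα)) (ZMod p) with hπ
  set v : Fin n → ZMod p := fun k => eval y (pderiv k (map (Int.castRingHom (ZMod p)) f))
    with hv
  set S := {x : Fin n → ZMod (p ^ α) //
      (∀ k, π (x k) = y k)
      ∧ eval x (map (Int.castRingHom (ZMod (p ^ α))) f) = 0
      ∧ ∑ k, (a k : ZMod (p ^ α)) * x k = 0} with hS
  set T := ∀ k : {k : Fin n // ¬ (k = i ∨ k = j)}, {z : ZMod (p ^ α) // π z = y k.1} with hT
  have hcard : Nat.card T = p ^ ((α - 1) * (n - 2)) := by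
    refine card_pi_fiber p hp α hα _ ?_ _
    have hfil : (univ.filter (fun k : Fin n => k = i ∨ k = j)) = {i, j} := by
      ext k; simp
    rw [Fintype.card_subtype_compl, Fintype.card_subtype, hfil, Finset.card_insert_of_notMem
      (by simpa using hij), Finset.card_singleton, Fintype.card_fin]
  have hinj : Function.Injective
      (fun (x : S) =>
        (fun k : {k : Fin n // ¬ (k = i ∨ k = j)} => (⟨x.1 k.1, x.2.1 k.1⟩ :
          {z : ZMod (p ^ α) // π z = y k.1}) : T)) := by
    rintro x x' h
    have hcoord : ∀ k : Fin n, ¬ (k = i ∨ k = j) → x.1 k = x'.1 k := fun k hk =>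
      congrArg Subtype.val (congrFun h ⟨k, hk⟩)
    set X : Fin n → ℤ := fun k => ((x.1 k).val : ℤ) with hX
    set X' : Fin n → ℤ := fun k => ((x'.1 k).val : ℤ) with hX'
    have hXA : ∀ k, ((X k : ℤ) : ZMod (p ^ α)) = x.1 k := fun k => by
      simp [hX, ZMod.natCast_val, ZMod.cast_id]
    have hX'A : ∀ k, ((X' k : ℤ) : ZMod (p ^ α)) = x'.1 k := fun k => by
      simp [hX', ZMod.natCast_val, ZMod.cast_id]
    have hXp : ∀ k, ((X k : ℤ) : ZMod p) = y k := fun k => by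
      rw [← map_intCast π (X k), hXA k]; exact x.2.1 k
    have hX'p : ∀ k, ((X' k : ℤ) : ZMod p) = y k := fun k => by
      rw [← map_intCast π (X' k), hX'A k]; exact x'.2.1 k
    have hfX : ((p : ℤ) ^ α) ∣ eval X f := by
      have h1 : ((eval X f : ℤ) : ZMod (p ^ α)) = 0 := by
        rw [eval_int_cast, show (fun k => ((X k : ℤ) : ZMod (p ^ α))) = x.1 from funext hXA]
        exact x.2.2.1
      have := (ZMod.intCast_zmod_eq_zero_iff_dvd _ (p ^ α)).mp h1
      exact_mod_cast this
    have hfX' : ((p : ℤ) ^ α) ∣ eval X' f := by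
      have h1 : ((eval X' f : ℤ) : ZMod (p ^ α)) = 0 := by
        rw [eval_int_cast, show (fun k => ((X' k : ℤ) : ZMod (p ^ α))) = x'.1 from funext hX'A]
        exact x'.2.2.1
      have := (ZMod.intCast_zmod_eq_zero_iff_dvd _ (p ^ α)).mp h1
      exact_mod_cast this
    have hlinX : ((p : ℤ) ^ α) ∣ ∑ k, a k * X k := by
      have h1 : ((∑ k, a k * X k : ℤ) : ZMod (p ^ α)) = 0 := by
        push_cast
        rw [Finset.sum_congr rfl (fun k _ => by rw [hXA k])]
        exact x.2.2.2
      have := (ZMod.intCast_zmod_eq_zero_iff_dvd _ (p ^ α)).mp h1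
      exact_mod_cast this
    have hlinX' : ((p : ℤ) ^ α) ∣ ∑ k, a k * X' k := by
      have h1 : ((∑ k, a k * X' k : ℤ) : ZMod (p ^ α)) = 0 := by
        push_cast
        rw [Finset.sum_congr rfl (fun k _ => by rw [hX'A k])]
        exact x'.2.2.2
      have := (ZMod.intCast_zmod_eq_zero_iff_dvd _ (p ^ α)).mp h1
      exact_mod_cast this
    have hvX : ∀ k, ((eval X (pderiv k f) : ℤ) : ZMod p) = v k := by
      intro k
      rw [eval_int_cast, show (fun t => ((X t : ℤ) : ZMod p)) = y from funext hXp, hv,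
        ← pderiv_map]
    have claim : ∀ β, 1 ≤ β → β ≤ α → ∀ k, (p : ℤ) ^ β ∣ X' k - X k := by
      intro β hβ1
      induction β, hβ1 using Nat.le_induction with
      | base =>
        intro _ k
        have h1 : ((X' k - X k : ℤ) : ZMod p) = 0 := by
          push_cast
          rw [hXp k, hX'p k, sub_self]
        have := (ZMod.intCast_zmod_eq_zero_iff_dvd _ p).mp h1
        rw [pow_one]
        exact_mod_cast this
      | succ β hβ1 IH =>
        intro hβα
        have hY : ∀ k, (p : ℤ) ^ β ∣ X' k - X k := IH (by omega)
        set Y : Fin n → ℤ := fun k => X' k - X k with hYdef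
        set H : Fin n → ℤ := fun k => Y k / (p : ℤ) ^ β with hHdef
        have hH : ∀ k, (p : ℤ) ^ β * H k = Y k := fun k => Int.mul_ediv_cancel' (hY k)
        have hXY : X + Y = X' := funext fun k => by simp [hYdef]
        have htay := taylor_dvd f ((p : ℤ) ^ β) X Y hY
        rw [hXY] at htay
        have h2β : (p : ℤ) ^ (β + 1) ∣ ((p : ℤ) ^ β) ^ 2 := by
          rw [← pow_mul]; exact pow_dvd_pow _ (by omega)
        have hαd : (p : ℤ) ^ (β + 1) ∣ (p : ℤ) ^ α := pow_dvd_pow _ hβα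
        have hcancel : ∀ c : Fin n → ℤ, ((p : ℤ) ^ (β + 1) ∣ ∑ k, Y k * c k) →
            (p : ℤ) ∣ ∑ k, H k * c k := by
          intro c hc
          have e : ∑ k, Y k * c k = (p : ℤ) ^ β * ∑ k, H k * c k := by
            rw [Finset.mul_sum]
            exact Finset.sum_congr rfl fun k _ => by rw [← hH k]; ring
          rw [e, pow_succ] at hc
          exact (mul_dvd_mul_iff_left (pow_ne_zero β hpz)).mp hc
        have hgrad : (p : ℤ) ∣ ∑ k, H k * eval X (pderiv k f) := by
          refine hcancel _ ?_
          have e : ∑ k, Y k * eval X (pderiv k f)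
              = (eval X' f - eval X f)
                - (eval X' f - eval X f - ∑ k, Y k * eval X (pderiv k f)) := by ring
          rw [e]
          exact dvd_sub (dvd_sub (hαd.trans hfX') (hαd.trans hfX)) (h2β.trans htay)
        have hlin : (p : ℤ) ∣ ∑ k, H k * a k := by
          refine hcancel _ ?_
          have e : ∑ k, Y k * a k = (∑ k, a k * X' k) - (∑ k, a k * X k) := by
            rw [← Finset.sum_sub_distrib]
            exact Finset.sum_congr rfl fun k _ => by simp [hYdef]; ring
          rw [e]
          exact dvd_sub (hαd.trans hlinX') (hαd.trans hlinX)
        set hbar : Fin n → ZMod p := fun k => ((H k : ℤ) : ZMod p) with hbardef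
        have hYoff : ∀ k, ¬ (k = i ∨ k = j) → (p : ℤ) ^ α ∣ Y k := by
          intro k hk
          have h1 : ((Y k : ℤ) : ZMod (p ^ α)) = 0 := by
            rw [hYdef]; push_cast
            rw [hXA k, hX'A k, hcoord k hk, sub_self]
          have := (ZMod.intCast_zmod_eq_zero_iff_dvd _ (p ^ α)).mp h1
          exact_mod_cast this
        have hoff : ∀ k, ¬ (k = i ∨ k = j) → hbar k = 0 := by
          intro k hk
          have hdk : (p : ℤ) ^ (β + 1) ∣ (p : ℤ) ^ β * H k := by
            rw [hH k]; exact hαd.trans (hYoff k hk)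
          rw [pow_succ] at hdk
          have := (mul_dvd_mul_iff_left (pow_ne_zero β hpz)).mp hdk
          exact (ZMod.intCast_zmod_eq_zero_iff_dvd _ p).mpr (by exact_mod_cast this)
        have hpair : ∀ c : Fin n → ℤ, ∀ u : Fin n → ZMod p,
            (∀ k, ((c k : ℤ) : ZMod p) = u k) → ((p : ℤ) ∣ ∑ k, H k * c k) →
            hbar i * u i + hbar j * u j = 0 := by
          intro c u hu hdvd
          have h0 : ((∑ k, H k * c k : ℤ) : ZMod p) = 0 :=
            (ZMod.intCast_zmod_eq_zero_iff_dvd _ p).mpr (by exact_mod_cast hdvd)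
          push_cast at h0
          have h1 : ∑ k, hbar k * u k = 0 := by
            rw [← h0]
            exact Finset.sum_congr rfl fun k _ => by rw [hu k]
          have h2 : ∑ k ∈ ({i, j} : Finset (Fin n)), hbar k * u k = ∑ k, hbar k * u k :=
            Finset.sum_subset (Finset.subset_univ _) (fun k _ hk => by
              rw [hoff k (by simpa using hk), zero_mul])
          calc hbar i * u i + hbar j * u j
              = ∑ k ∈ ({i, j} : Finset (Fin n)), hbar k * u k := by
                rw [Finset.sum_pair hij]
            _ = ∑ k, hbar k * u k := h2
            _ = 0 := h1
        set w : Fin n → ZMod p := fun k => ((a k : ℤ) : ZMod p) with hwdef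
        have e1 : hbar i * v i + hbar j * v j = 0 :=
          hpair (fun k => eval X (pderiv k f)) v hvX hgrad
        have e2 : hbar i * w i + hbar j * w j = 0 :=
          hpair a w (fun k => rfl) hlin
        have hbi : hbar i = 0 := by
          have hmul : hbar i * (v i * w j - v j * w i)
              = (hbar i * v i + hbar j * v j) * w j
                - (hbar i * w i + hbar j * w j) * v j := by ring
          rw [e1, e2, zero_mul, zero_mul, sub_zero] at hmul
          rcases mul_eq_zero.mp hmul with h | h
          · exact h
          · exact absurd h hδ
        have hbj : hbar j = 0 := by
          have hmul : hbar j * (v i * w j - v j * w i)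
              = (hbar i * w i + hbar j * w j) * v i
                - (hbar i * v i + hbar j * v j) * w i := by ring
          rw [e1, e2, zero_mul, zero_mul, sub_zero] at hmul
          rcases mul_eq_zero.mp hmul with h | h
          · exact h
          · exact absurd h hδ
        intro k
        have hYeq : X' k - X k = Y k := rfl
        by_cases hk : k = i ∨ k = j
        · have hb0 : (p : ℤ) ∣ H k := by
            rcases hk with rfl | rfl
            · exact_mod_cast (ZMod.intCast_zmod_eq_zero_iff_dvd (H k) p).mp hbi
            · exact_mod_cast (ZMod.intCast_zmod_eq_zero_iff_dvd (H k) p).mp hbj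
          rw [hYeq, ← hH k, pow_succ]
          exact mul_dvd_mul_left _ hb0
        · rw [hYeq]
          exact hαd.trans (hYoff k hk)
    have hfin : ∀ k, x.1 k = x'.1 k := by
      intro k
      have := claim α hα le_rfl k
      have h1 : ((X' k - X k : ℤ) : ZMod (p ^ α)) = 0 := by
        refine (ZMod.intCast_zmod_eq_zero_iff_dvd _ (p ^ α)).mpr ?_
        exact_mod_cast this
      push_cast at h1
      rw [hXA k, hX'A k, sub_eq_zero] at h1
      exact h1.symm
    exact Subtype.ext (funext hfin)
  calc Nat.card S ≤ Nat.card T := Nat.card_le_card_of_injective _ hinj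
    _ = p ^ ((α - 1) * (n - 2)) := hcard
    _ = p ^ ((n - 2) * (α - 1)) := by rw [Nat.mul_comm]

end LiftLemmas

/-- let `f ∈ ℤ_p[x₁,…,xₙ]` (here with integer coefficients) be homogeneous
of degree `d` with `Z_f ⊂ ℙ^{n-1}` smooth over `ℤ_p`, and `a ∉ pℤⁿ` defining the
hyperplane `H_a`; put `Z_{f,a} = Z_f ∩ H_a` and let `Z^t_{f,a}(𝔽_p)` (resp.
`Z^{nt}_{f,a}(𝔽_p)`) be its `𝔽_p`-points where the intersection is transverse (`∇f` not
proportional to `a`), resp. not transverse. Then for all `α ≥ 1`: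
`#Z_{f,a}(ℤ/p^αℤ) ≤ p^{(n-3)(α-1)} #Z^t_{f,a}(𝔽_p) + p^{(n-2)(α-1)} #Z^{nt}_{f,a}(𝔽_p)`. -/
theorem stmt_11 (p : ℕ) [hp : Fact p.Prime] (n d : ℕ) (hn : 3 ≤ n) (hd : 1 ≤ d)
    (f : MvPolynomial (Fin n) ℤ) (hf : f.IsHomogeneous d)
    (hsmooth : ∀ x : Fin n → ZMod p, x ≠ 0 →
      eval x (map (Int.castRingHom (ZMod p)) f) = 0 →
      ∃ i, eval x (pderiv i (map (Int.castRingHom (ZMod p)) f)) ≠ 0)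
    (a : Fin n → ℤ) (ha : ¬ ∀ i, (p : ℤ) ∣ a i)
    (α : ℕ) (hα : 1 ≤ α) :
    projCard (ZMod (p ^ α)) (fun x =>
        eval x (map (Int.castRingHom (ZMod (p ^ α))) f) = 0 ∧
        (∑ i, (a i : ZMod (p ^ α)) * x i) = 0)
      ≤ p ^ ((n - 3) * (α - 1)) *
          projCard (ZMod p) (fun x =>
            eval x (map (Int.castRingHom (ZMod p)) f) = 0 ∧
            (∑ i, (a i : ZMod p) * x i) = 0 ∧
            ¬ ∃ c : ZMod p, ∀ i,
              eval x (pderiv i (map (Int.castRingHom (ZMod p)) f)) = c * (a i : ZMod p))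
        + p ^ ((n - 2) * (α - 1)) *
          projCard (ZMod p) (fun x =>
            eval x (map (Int.castRingHom (ZMod p)) f) = 0 ∧
            (∑ i, (a i : ZMod p) * x i) = 0 ∧
            ∃ c : ZMod p, ∀ i,
              eval x (pderiv i (map (Int.castRingHom (ZMod p)) f)) = c * (a i : ZMod p)) := by
  classical
  have hprime := hp.out
  have hn2 : n - 2 = (n - 3) + 1 := by omega
  have hn1 : n - 1 = (n - 2) + 1 := by omega
  have hp1 : 0 < p - 1 := by have := hprime.two_le; omega
  haveI : NeZero (p ^ α) := ⟨pow_ne_zero _ hprime.ne_zero⟩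
  obtain ⟨i₀, hai₀⟩ := not_forall.mp ha
  set π := ZMod.castHom (dvd_pow_self p (Nat.one_le_iff_ne_zero.mp hα)) (ZMod p) with hπdef
  -- gradient scaling mod p
  have hgradscale : ∀ (u : (ZMod p)ˣ) (x : Fin n → ZMod p) (i : Fin n),
      eval (fun t => (u : ZMod p) * x t) (pderiv i (map (Int.castRingHom (ZMod p)) f))
        = (u : ZMod p) ^ (d - 1)
          * eval x (pderiv i (map (Int.castRingHom (ZMod p)) f)) := by
    intro u x i
    rw [pderiv_map]
    exact eval_unit_mul _ ((isHomogeneous_pderiv hf i).map _) _ _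
  -- the three orbit-count identities
  have eA := card_sol (ZMod (p ^ α)) (fun x =>
      eval x (map (Int.castRingHom (ZMod (p ^ α))) f) = 0 ∧
      (∑ i, (a i : ZMod (p ^ α)) * x i) = 0) (by
    intro u x hx
    refine ⟨?_, ?_⟩
    · rw [eval_unit_mul _ (hf.map _) _ x, hx.1, mul_zero]
    · have h1 : ∑ i, (a i : ZMod (p ^ α)) * ((u : ZMod (p ^ α)) * x i)
          = (u : ZMod (p ^ α)) * ∑ i, (a i : ZMod (p ^ α)) * x i := by
        rw [Finset.mul_sum]; exact Finset.sum_congr rfl fun i _ => by ring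
      rw [h1, hx.2, mul_zero])
  have et := card_sol (ZMod p) (fun x =>
      eval x (map (Int.castRingHom (ZMod p)) f) = 0 ∧
      (∑ i, (a i : ZMod p) * x i) = 0 ∧
      ¬ ∃ c : ZMod p, ∀ i,
        eval x (pderiv i (map (Int.castRingHom (ZMod p)) f)) = c * (a i : ZMod p)) (by
    intro u x hx
    refine ⟨?_, ?_, ?_⟩
    · rw [eval_unit_mul _ (hf.map _) _ x, hx.1, mul_zero]
    · have h1 : ∑ i, (a i : ZMod p) * ((u : ZMod p) * x i)
          = (u : ZMod p) * ∑ i, (a i : ZMod p) * x i := by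
        rw [Finset.mul_sum]; exact Finset.sum_congr rfl fun i _ => by ring
      rw [h1, hx.2.1, mul_zero]
    · rintro ⟨c, hc⟩
      refine hx.2.2 ⟨((u⁻¹ : (ZMod p)ˣ) : ZMod p) ^ (d - 1) * c, fun i => ?_⟩
      have h2 := hc i
      rw [hgradscale u x i] at h2
      have h3 : ((u⁻¹ : (ZMod p)ˣ) : ZMod p) ^ (d - 1) * ((u : ZMod p) ^ (d - 1)
          * eval x (pderiv i (map (Int.castRingHom (ZMod p)) f)))
          = eval x (pderiv i (map (Int.castRingHom (ZMod p)) f)) := by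
        rw [← mul_assoc, ← mul_pow, Units.inv_mul, one_pow, one_mul]
      rw [← h3, h2, ← mul_assoc])
  have ent := card_sol (ZMod p) (fun x =>
      eval x (map (Int.castRingHom (ZMod p)) f) = 0 ∧
      (∑ i, (a i : ZMod p) * x i) = 0 ∧
      ∃ c : ZMod p, ∀ i,
        eval x (pderiv i (map (Int.castRingHom (ZMod p)) f)) = c * (a i : ZMod p)) (by
    intro u x hx
    obtain ⟨hx1, hx2, c, hc⟩ := hx
    refine ⟨?_, ?_, ⟨(u : ZMod p) ^ (d - 1) * c, fun i => ?_⟩⟩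
    · rw [eval_unit_mul _ (hf.map _) _ x, hx1, mul_zero]
    · have h1 : ∑ i, (a i : ZMod p) * ((u : ZMod p) * x i)
          = (u : ZMod p) * ∑ i, (a i : ZMod p) * x i := by
        rw [Finset.mul_sum]; exact Finset.sum_congr rfl fun i _ => by ring
      rw [h1, hx2, mul_zero]
    · rw [hgradscale u x i, hc i, ← mul_assoc])
  -- the reduction map
  set Solk := {x : Fin n → ZMod p // (∃ i, IsUnit (x i)) ∧
    (eval x (map (Int.castRingHom (ZMod p)) f) = 0 ∧
      (∑ i, (a i : ZMod p) * x i) = 0)} with hSolk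
  set SolA := {x : Fin n → ZMod (p ^ α) // (∃ i, IsUnit (x i)) ∧
    (eval x (map (Int.castRingHom (ZMod (p ^ α))) f) = 0 ∧
      (∑ i, (a i : ZMod (p ^ α)) * x i) = 0)} with hSolA
  have hredmem : ∀ x : SolA, (∃ i, IsUnit (π (x.1 i))) ∧
      (eval (fun i => π (x.1 i)) (map (Int.castRingHom (ZMod p)) f) = 0 ∧
        (∑ i, (a i : ZMod p) * π (x.1 i)) = 0) := by
    intro x
    obtain ⟨⟨i, hi⟩, hfx, hlx⟩ := x.2
    refine ⟨⟨i, hi.map π⟩, ?_, ?_⟩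
    · rw [← map_eval_map π f x.1, hfx, map_zero]
    · have h1 : ∑ i, (a i : ZMod p) * π (x.1 i)
          = π (∑ i, (a i : ZMod (p ^ α)) * x.1 i) := by
        rw [map_sum]
        exact Finset.sum_congr rfl fun i _ => by rw [map_mul, map_intCast]
      rw [h1, hlx, map_zero]
  set red : SolA → Solk := fun x => ⟨fun i => π (x.1 i), hredmem x⟩ with hreddef
  set Q : Solk → Prop := fun y => ¬ ∃ c : ZMod p, ∀ i,
    eval y.1 (pderiv i (map (Int.castRingHom (ZMod p)) f)) = c * (a i : ZMod p) with hQdef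
  haveI : Fintype Solk := Fintype.ofFinite _
  -- fiber bounds
  have hfib_t : ∀ y : Solk, Q y →
      Nat.card {x : SolA // red x = y} ≤ p ^ ((n - 2) * (α - 1)) := by
    intro y hQy
    have hw : (a i₀ : ZMod p) ≠ 0 := fun h0 =>
      hai₀ ((ZMod.intCast_zmod_eq_zero_iff_dvd _ p).mp h0)
    obtain ⟨i, j, hij, hδ⟩ := exists_minor p
      (fun k => eval y.1 (pderiv k (map (Int.castRingHom (ZMod p)) f)))
      (fun k => (a k : ZMod p)) i₀ hw hQy
    have hinj : Function.Injective (fun (x : {x : SolA // red x = y}) =>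
        (⟨x.1.1, fun k => congrFun (congrArg Subtype.val x.2) k, x.1.2.2.1, x.1.2.2.2⟩ :
          {z : Fin n → ZMod (p ^ α) //
            (∀ k, π (z k) = y.1 k)
            ∧ eval z (map (Int.castRingHom (ZMod (p ^ α))) f) = 0
            ∧ ∑ k, (a k : ZMod (p ^ α)) * z k = 0})) := by
      intro x x' hxx
      have h3 := congrArg Subtype.val hxx
      exact Subtype.ext (Subtype.ext h3)
    calc Nat.card {x : SolA // red x = y}
        ≤ Nat.card {z : Fin n → ZMod (p ^ α) //
            (∀ k, π (z k) = y.1 k)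
            ∧ eval z (map (Int.castRingHom (ZMod (p ^ α))) f) = 0
            ∧ ∑ k, (a k : ZMod (p ^ α)) * z k = 0} :=
          Nat.card_le_card_of_injective _ hinj
      _ ≤ p ^ ((n - 2) * (α - 1)) := lift_trans p α hα n f a y.1 i j hij hδ
  have hfib_nt : ∀ y : Solk, ¬ Q y →
      Nat.card {x : SolA // red x = y} ≤ p ^ ((n - 1) * (α - 1)) := by
    intro y hQy
    have hinj : Function.Injective (fun (x : {x : SolA // red x = y}) =>
        (⟨x.1.1, fun k => congrFun (congrArg Subtype.val x.2) k, x.1.2.2.1, x.1.2.2.2⟩ :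
          {z : Fin n → ZMod (p ^ α) //
            (∀ k, π (z k) = y.1 k)
            ∧ eval z (map (Int.castRingHom (ZMod (p ^ α))) f) = 0
            ∧ ∑ k, (a k : ZMod (p ^ α)) * z k = 0})) := by
      intro x x' hxx
      have h3 := congrArg Subtype.val hxx
      exact Subtype.ext (Subtype.ext h3)
    calc Nat.card {x : SolA // red x = y}
        ≤ Nat.card {z : Fin n → ZMod (p ^ α) //
            (∀ k, π (z k) = y.1 k)
            ∧ eval z (map (Int.castRingHom (ZMod (p ^ α))) f) = 0
            ∧ ∑ k, (a k : ZMod (p ^ α)) * z k = 0} :=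
          Nat.card_le_card_of_injective _ hinj
      _ ≤ p ^ ((n - 1) * (α - 1)) := lift_lin p hprime α hα n a i₀ hai₀ y.1
          (fun z => eval z (map (Int.castRingHom (ZMod (p ^ α))) f) = 0)
  have key := card_le_split red Q (p ^ ((n - 2) * (α - 1))) (p ^ ((n - 1) * (α - 1)))
    hfib_t hfib_nt
  -- identify the subtype cardinalities
  have et2 : Nat.card {y : Solk // Q y}
      = Nat.card {x : Fin n → ZMod p // (∃ i, IsUnit (x i)) ∧
        (eval x (map (Int.castRingHom (ZMod p)) f) = 0 ∧
          (∑ i, (a i : ZMod p) * x i) = 0 ∧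
          ¬ ∃ c : ZMod p, ∀ i,
            eval x (pderiv i (map (Int.castRingHom (ZMod p)) f)) = c * (a i : ZMod p))} :=
    Nat.card_congr ⟨fun y => ⟨y.1.1, y.1.2.1, y.1.2.2.1, y.1.2.2.2, y.2⟩,
      fun x => ⟨⟨x.1, x.2.1, x.2.2.1, x.2.2.2.1⟩, x.2.2.2.2⟩,
      fun y => rfl, fun x => rfl⟩
  have ent2 : Nat.card {y : Solk // ¬ Q y}
      = Nat.card {x : Fin n → ZMod p // (∃ i, IsUnit (x i)) ∧
        (eval x (map (Int.castRingHom (ZMod p)) f) = 0 ∧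
          (∑ i, (a i : ZMod p) * x i) = 0 ∧
          ∃ c : ZMod p, ∀ i,
            eval x (pderiv i (map (Int.castRingHom (ZMod p)) f)) = c * (a i : ZMod p))} :=
    Nat.card_congr ⟨fun y => ⟨y.1.1, y.1.2.1, y.1.2.2.1, y.1.2.2.2, not_not.mp y.2⟩,
      fun x => ⟨⟨x.1, x.2.1, x.2.2.1, x.2.2.2.1⟩, not_not.mpr x.2.2.2.2⟩,
      fun y => rfl, fun x => rfl⟩
  -- unit group cardinalities
  have hUA : Nat.card (ZMod (p ^ α))ˣ = p ^ (α - 1) * (p - 1) := by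
    rw [Nat.card_eq_fintype_card, ZMod.card_units_eq_totient,
      Nat.totient_prime_pow hprime hα]
  have hUk : Nat.card (ZMod p)ˣ = p - 1 := by
    haveI : NeZero p := ⟨hprime.ne_zero⟩
    rw [Nat.card_eq_fintype_card, ZMod.card_units_eq_totient, Nat.totient_prime hprime]
  rw [et2, ent2, eA, et, ent, hUA, hUk] at key
  -- final arithmetic
  have hpos : 0 < p ^ (α - 1) * (p - 1) :=
    Nat.mul_pos (pow_pos hprime.pos _) hp1
  refine Nat.le_of_mul_le_mul_right ?_ hpos
  have hc2 : p ^ ((n - 2) * (α - 1)) = p ^ ((n - 3) * (α - 1)) * p ^ (α - 1) := by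
    rw [← pow_add]
    congr 1
    rw [hn2, add_mul, one_mul]
  have hc1 : p ^ ((n - 1) * (α - 1)) = p ^ ((n - 2) * (α - 1)) * p ^ (α - 1) := by
    rw [← pow_add]
    congr 1
    rw [hn1, add_mul, one_mul]
  calc projCard (ZMod (p ^ α)) (fun x =>
        eval x (map (Int.castRingHom (ZMod (p ^ α))) f) = 0 ∧
        (∑ i, (a i : ZMod (p ^ α)) * x i) = 0) * (p ^ (α - 1) * (p - 1))
      ≤ p ^ ((n - 2) * (α - 1)) * (projCard (ZMod p) (fun x =>
            eval x (map (Int.castRingHom (ZMod p)) f) = 0 ∧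
            (∑ i, (a i : ZMod p) * x i) = 0 ∧
            ¬ ∃ c : ZMod p, ∀ i,
              eval x (pderiv i (map (Int.castRingHom (ZMod p)) f)) = c * (a i : ZMod p))
          * (p - 1))
        + p ^ ((n - 1) * (α - 1)) * (projCard (ZMod p) (fun x =>
            eval x (map (Int.castRingHom (ZMod p)) f) = 0 ∧
            (∑ i, (a i : ZMod p) * x i) = 0 ∧
            ∃ c : ZMod p, ∀ i,
              eval x (pderiv i (map (Int.castRingHom (ZMod p)) f)) = c * (a i : ZMod p))
          * (p - 1)) := by
        exact key
    _ = (p ^ ((n - 3) * (α - 1)) * projCard (ZMod p) (fun x =>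
            eval x (map (Int.castRingHom (ZMod p)) f) = 0 ∧
            (∑ i, (a i : ZMod p) * x i) = 0 ∧
            ¬ ∃ c : ZMod p, ∀ i,
              eval x (pderiv i (map (Int.castRingHom (ZMod p)) f)) = c * (a i : ZMod p))
        + p ^ ((n - 2) * (α - 1)) * projCard (ZMod p) (fun x =>
            eval x (map (Int.castRingHom (ZMod p)) f) = 0 ∧
            (∑ i, (a i : ZMod p) * x i) = 0 ∧
            ∃ c : ZMod p, ∀ i,
              eval x (pderiv i (map (Int.castRingHom (ZMod p)) f)) = c * (a i : ZMod p)))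
        * (p ^ (α - 1) * (p - 1)) := by
        rw [hc1, hc2]
        ring
end

section
/- Let p be a prime, and for α ≥ 1 and 1 ≤ β ≤ α define V(α,β) = {x ∈ Z_p^n : ‖x‖_p = 1, p^β | f(x), p^α | ⟨a,x⟩}, where f is homogeneous of degree d with Z_f and Z_{f,a} = Z_f ∩ H_a smooth over Z_p and a ∉ pZ_p^n. Then vol(V(α,β)) = p^{-α} p^{(2-n)β} (1 - 1/p) · #Z_{f,a}(Z/p^β Z). -/
open MvPolynomial MeasureTheory
open scoped ENNReal

section PartC
variable {n : ℕ} {R : Type*} [CommRing R] [Finite R]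

lemma card_primitive_eq_projCard_mul (P : (Fin n → R) → Prop)
    (hP : ∀ (u : Rˣ) (x : Fin n → R), ((∃ i, IsUnit (x i)) ∧ P x) → P (fun i => (u : R) * x i)) :
    Nat.card {x : Fin n → R // (∃ i, IsUnit (x i)) ∧ P x} = projCard R P * Nat.card Rˣ := by
  classical
  set S := {x : Fin n → R // (∃ i, IsUnit (x i)) ∧ P x} with hS
  letI s : Setoid S :=
    ⟨fun x y => ∃ u : Rˣ, ∀ i, y.1 i = (u : R) * x.1 i, by
      constructor
      · exact fun x => ⟨1, fun i => by simp⟩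
      · rintro x y ⟨u, hu⟩
        exact ⟨u⁻¹, fun i => by rw [hu i, ← mul_assoc, Units.inv_mul, one_mul]⟩
      · rintro x y z ⟨u, hu⟩ ⟨v, hv⟩
        exact ⟨v * u, fun i => by rw [hv i, hu i, Units.val_mul, mul_assoc]⟩⟩
  have hQ : projCard R P = Nat.card (Quotient s) := rfl
  haveI : Finite S := Subtype.finite
  haveI : Fintype S := Fintype.ofFinite S
  haveI : Fintype (Quotient s) := Quotient.fintype s
  -- fibers of Quotient.mk
  have key : ∀ q : Quotient s, Nat.card {x : S // Quotient.mk s x = q} = Nat.card Rˣ := by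
    intro q
    obtain ⟨x₀, rfl⟩ := q.exists_rep
    have hb : Function.Bijective (fun u : Rˣ =>
        (⟨⟨fun i => (u : R) * x₀.1 i,
          ⟨(x₀.2.1).imp fun i hi => (u.isUnit.mul hi), hP u x₀.1 x₀.2⟩⟩,
          Quotient.sound ⟨u⁻¹, fun i => by
            simp only; rw [← mul_assoc, Units.inv_mul, one_mul]⟩⟩ :
          {x : S // Quotient.mk s x = Quotient.mk s x₀})) := by
      constructor
      · intro u v huv
        obtain ⟨i, hi⟩ := x₀.2.1
        have := congrFun (congrArg (fun z => (z.1.1 : Fin n → R)) huv) i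
        simp only at this
        have h2 : x₀.1 i * (u : R) = x₀.1 i * (v : R) := by
          rw [mul_comm, this, mul_comm]
        exact Units.ext (hi.mul_left_cancel h2)
      · rintro ⟨⟨y, hy⟩, hq⟩
        obtain ⟨u, hu⟩ := Quotient.exact hq
        refine ⟨u⁻¹, ?_⟩
        apply Subtype.ext; apply Subtype.ext
        funext i
        simp only
        rw [hu i, ← mul_assoc, Units.inv_mul, one_mul]
    exact (Nat.card_congr (Equiv.ofBijective _ hb)).symm
  have hsig : Nat.card S = ∑ q : Quotient s, Nat.card {x : S // Quotient.mk s x = q} := by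
    rw [← Nat.card_congr (Equiv.sigmaFiberEquiv (Quotient.mk s)),
      Nat.card_eq_fintype_card, Fintype.card_sigma]
    simp [Nat.card_eq_fintype_card]
  rw [hsig, hQ]
  simp only [key, Finset.sum_const, Finset.card_univ, smul_eq_mul, Nat.card_eq_fintype_card]
end PartC

section PartB
variable (p : ℕ) [hp : Fact p.Prime] {α β : ℕ} (hβα : β ≤ α)

lemma sum_split {n : ℕ} {M : Type*} [AddCommMonoid M] (j : Fin n) (f : Fin n → M) :
    ∑ i, f i = f j + ∑ i : {i : Fin n // i ≠ j}, f i := by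
  classical
  rw [← Finset.add_sum_erase Finset.univ f (Finset.mem_univ j)]
  congr 1
  exact (Finset.sum_subtype (p := fun i => i ≠ j) (Finset.univ.erase j)
    (fun x => by simp [Finset.mem_erase]) f)

lemma card_ker_cast :
    Nat.card {t : ZMod (p ^ α) // ZMod.castHom (pow_dvd_pow p hβα) (ZMod (p ^ β)) t = 0}
      = p ^ (α - β) := by
  haveI : NeZero (p ^ α) := ⟨pow_ne_zero _ hp.out.ne_zero⟩
  haveI : NeZero (p ^ β) := ⟨pow_ne_zero _ hp.out.ne_zero⟩
  set φ := (ZMod.castHom (pow_dvd_pow p hβα) (ZMod (p ^ β))).toAddMonoidHom with hφ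
  have hsurj : Function.Surjective φ := ZMod.ringHom_surjective _
  have h1 : Nat.card (ZMod (p ^ α)) = Nat.card (ZMod (p ^ α) ⧸ φ.ker) * Nat.card φ.ker :=
    AddSubgroup.card_eq_card_quotient_mul_card_addSubgroup _
  have h2 : Nat.card (ZMod (p ^ α) ⧸ φ.ker) = Nat.card (ZMod (p ^ β)) :=
    Nat.card_congr (QuotientAddGroup.quotientKerEquivOfSurjective φ hsurj).toEquiv
  rw [h2, Nat.card_zmod, Nat.card_zmod] at h1
  have h3 : Nat.card {t : ZMod (p ^ α) // ZMod.castHom (pow_dvd_pow p hβα) (ZMod (p ^ β)) t = 0}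
      = Nat.card φ.ker := rfl
  have h4 : p ^ β * p ^ (α - β) = p ^ β * Nat.card φ.ker := by
    rw [← pow_add, Nat.add_sub_cancel' hβα]; exact h1
  rw [h3]
  exact (Nat.eq_of_mul_eq_mul_left (pow_pos hp.out.pos _) h4).symm

lemma card_linear_fiber {n : ℕ} (a : Fin n → ℤ) (j : Fin n)
    (hj : IsUnit ((a j : ZMod (p ^ α)))) (t : ZMod (p ^ α))
    (ht : ZMod.castHom (pow_dvd_pow p hβα) (ZMod (p ^ β)) t = 0) :
    Nat.card {k : Fin n → ZMod (p ^ α) //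
        (∀ i, ZMod.castHom (pow_dvd_pow p hβα) (ZMod (p ^ β)) (k i) = 0) ∧
        ∑ i, (a i : ZMod (p ^ α)) * k i = t}
      = (p ^ (α - β)) ^ (n - 1) := by
  classical
  set r := ZMod.castHom (pow_dvd_pow p hβα) (ZMod (p ^ β)) with hr
  set K := {z : ZMod (p ^ α) // r z = 0} with hK
  set u := hj.unit with hu
  have hja : (a j : ZMod (p ^ α)) * (↑u⁻¹ : ZMod (p ^ α)) = 1 := by
    rw [← hj.unit_spec, ← hu, Units.mul_inv_eq_one]
  have hja' : (↑u⁻¹ : ZMod (p ^ α)) * (a j : ZMod (p ^ α)) = 1 := by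
    rw [mul_comm]; exact hja
  set F : ({i : Fin n // i ≠ j} → K) → Fin n → ZMod (p ^ α) := fun g i =>
    if h : i = j
    then (↑u⁻¹ : ZMod (p ^ α)) * (t - ∑ i' : {i : Fin n // i ≠ j}, (a i'.1 : ZMod (p ^ α)) * (g i').1)
    else (g ⟨i, h⟩).1 with hF
  have hFj : ∀ g, F g j = (↑u⁻¹ : ZMod (p ^ α)) *
      (t - ∑ i' : {i : Fin n // i ≠ j}, (a i'.1 : ZMod (p ^ α)) * (g i').1) := fun g => dif_pos rfl
  have hFne : ∀ g i (h : i ≠ j), F g i = (g ⟨i, h⟩).1 := fun g i h => dif_neg h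
  have hker : ∀ g i, r (F g i) = 0 := by
    intro g i
    by_cases h : i = j
    · subst h
      rw [hFj, map_mul, map_sub, ht, map_sum]
      rw [Finset.sum_congr rfl (fun i' _ => by rw [map_mul, (g i').2, mul_zero]),
        Finset.sum_const, smul_zero, sub_zero, mul_zero]
    · rw [hFne g i h]; exact (g ⟨i, h⟩).2
  have hsum : ∀ g, ∑ i, (a i : ZMod (p ^ α)) * F g i = t := by
    intro g
    rw [sum_split j (fun i => (a i : ZMod (p ^ α)) * F g i)]
    rw [Finset.sum_congr rfl (fun i' _ => by rw [hFne g i'.1 i'.2]), hFj, ← mul_assoc, hja,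
      one_mul, sub_add_cancel]
  have hb : Function.Bijective (fun g : {i : Fin n // i ≠ j} → K =>
      (⟨F g, hker g, hsum g⟩ : {k : Fin n → ZMod (p ^ α) //
        (∀ i, r (k i) = 0) ∧ ∑ i, (a i : ZMod (p ^ α)) * k i = t})) := by
    constructor
    · intro g g' hgg
      funext i
      apply Subtype.ext
      have h2 : F g i.1 = F g' i.1 := congrFun (congrArg Subtype.val hgg) i.1
      rw [hFne g i.1 i.2, hFne g' i.1 i.2] at h2
      exact h2
    · rintro ⟨k, hk1, hk2⟩
      refine ⟨fun i => ⟨k i.1, hk1 i.1⟩, ?_⟩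
      apply Subtype.ext
      funext i
      simp only
      by_cases h : i = j
      · subst h
        rw [hFj]
        have hsum2 : ∑ i' : {i' : Fin n // i' ≠ i}, (a i'.1 : ZMod (p ^ α)) * k i'.1
            = t - (a i : ZMod (p ^ α)) * k i := by
          rw [eq_sub_iff_add_eq, ← hk2, sum_split i (fun i' => (a i' : ZMod (p ^ α)) * k i'),
            add_comm]
        rw [hsum2, sub_sub_cancel, ← mul_assoc, hja', one_mul]
      · rw [hFne _ i h]
  rw [← Nat.card_congr (Equiv.ofBijective _ hb), Nat.card_fun, card_ker_cast p hβα,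
    Nat.card_eq_fintype_card, Fintype.card_subtype_compl, Fintype.card_fin,
    Fintype.card_subtype_eq]
end PartB

section Helpers
variable (p : ℕ) [hp : Fact p.Prime]

lemma isUnit_zmod_pow_iff {m : ℕ} (hm : 1 ≤ m) (z : ZMod (p ^ m)) :
    IsUnit z ↔ ¬ p ∣ z.val := by
  haveI : NeZero (p ^ m) := ⟨pow_ne_zero _ hp.out.ne_zero⟩
  conv_lhs => rw [← ZMod.natCast_zmod_val z]
  rw [ZMod.isUnit_iff_coprime, Nat.coprime_pow_right_iff hm, Nat.coprime_comm]
  exact hp.out.coprime_iff_not_dvd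

lemma isUnit_cast_iff {α β : ℕ} (hβ : 1 ≤ β) (hβα : β ≤ α) (c : ZMod (p ^ α)) :
    IsUnit c ↔ IsUnit (ZMod.castHom (pow_dvd_pow p hβα) (ZMod (p ^ β)) c) := by
  haveI : NeZero (p ^ α) := ⟨pow_ne_zero _ hp.out.ne_zero⟩
  haveI : NeZero (p ^ β) := ⟨pow_ne_zero _ hp.out.ne_zero⟩
  rw [isUnit_zmod_pow_iff p (le_trans hβ hβα), isUnit_zmod_pow_iff p hβ]
  have h1 : (ZMod.castHom (pow_dvd_pow p hβα) (ZMod (p ^ β)) c) = ((c.val : ℕ) : ZMod (p ^ β)) := by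
    conv_lhs => rw [← ZMod.natCast_zmod_val c]
    rw [map_natCast]
  rw [h1, ZMod.val_natCast]
  rw [Nat.dvd_mod_iff (dvd_pow_self p (by omega : β ≠ 0))]

lemma isUnit_int_cast_zmod_pow_s16 {m : ℕ} (hm : 1 ≤ m) (a : ℤ) (ha : ¬ (p : ℤ) ∣ a) :
    IsUnit ((a : ZMod (p ^ m))) := by
  haveI : NeZero (p ^ m) := ⟨pow_ne_zero _ hp.out.ne_zero⟩
  have hnat : IsUnit ((a.natAbs : ZMod (p ^ m))) := by
    rw [ZMod.isUnit_iff_coprime, Nat.coprime_pow_right_iff hm, Nat.coprime_comm]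
    rw [hp.out.coprime_iff_not_dvd]
    intro hdvd
    exact ha (Int.dvd_natAbs.mp (Int.natCast_dvd_natCast.mpr hdvd))
  rcases Int.natAbs_eq a with h | h
  · rw [h, Int.cast_natCast]; exact hnat
  · rw [h, Int.cast_neg, Int.cast_natCast]; exact hnat.neg

lemma eval_mul_of_isHomogeneous {R : Type*} [CommRing R] {n m : ℕ}
    (φ : MvPolynomial (Fin n) R) (hφ : φ.IsHomogeneous m) (c : R) (x : Fin n → R) :
    eval (fun i => c * x i) φ = c ^ m * eval x φ := by
  rw [eval_eq', eval_eq', Finset.mul_sum]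
  apply Finset.sum_congr rfl
  intro d hd
  have hdeg : ∑ i, d i = m := by
    have h1 := hφ (mem_support_iff.mp hd)
    rw [← h1, Finsupp.weight_apply]
    rw [Finsupp.sum_fintype]
    · simp
    · intro i; simp
  have h2 : ∏ i, (c * x i) ^ d i = c ^ m * ∏ i, (x i) ^ d i := by
    simp_rw [mul_pow]
    rw [Finset.prod_mul_distrib, Finset.prod_pow_eq_pow_sum, hdeg]
  rw [h2]; ring
end Helpers

section PartB3
variable (p : ℕ) [hp : Fact p.Prime] {α β : ℕ} (hβα : β ≤ α)
variable {n : ℕ} (fβ : MvPolynomial (Fin n) (ZMod (p ^ β))) (a : Fin n → ℤ)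

/-- lifting count: solutions mod `p^α` over solutions mod `p^β`. -/
lemma card_lift (hβ : 1 ≤ β) (j : Fin n) (hj : ¬ (p : ℤ) ∣ a j) :
    Nat.card {c : Fin n → ZMod (p ^ α) //
        (∃ i, IsUnit (c i)) ∧
        (eval (fun i => ZMod.castHom (pow_dvd_pow p hβα) (ZMod (p ^ β)) (c i)) fβ = 0 ∧
          ∑ i, (a i : ZMod (p ^ β)) * ZMod.castHom (pow_dvd_pow p hβα) (ZMod (p ^ β)) (c i) = 0) ∧
        ∑ i, (a i : ZMod (p ^ α)) * c i = 0}
      = Nat.card {c0 : Fin n → ZMod (p ^ β) //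
          (∃ i, IsUnit (c0 i)) ∧
          (eval c0 fβ = 0 ∧ ∑ i, (a i : ZMod (p ^ β)) * c0 i = 0)}
        * (p ^ (α - β)) ^ (n - 1) := by
  classical
  haveI : NeZero (p ^ α) := ⟨pow_ne_zero _ hp.out.ne_zero⟩
  haveI : NeZero (p ^ β) := ⟨pow_ne_zero _ hp.out.ne_zero⟩
  set R := ZMod.castHom (pow_dvd_pow p hβα) (ZMod (p ^ β)) with hR
  set Gα := {c : Fin n → ZMod (p ^ α) //
      (∃ i, IsUnit (c i)) ∧
      (eval (fun i => R (c i)) fβ = 0 ∧ ∑ i, (a i : ZMod (p ^ β)) * R (c i) = 0) ∧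
      ∑ i, (a i : ZMod (p ^ α)) * c i = 0} with hGα
  set Gβ := {c0 : Fin n → ZMod (p ^ β) //
      (∃ i, IsUnit (c0 i)) ∧ (eval c0 fβ = 0 ∧ ∑ i, (a i : ZMod (p ^ β)) * c0 i = 0)} with hGβ
  haveI : Finite Gβ := Subtype.finite
  haveI : Fintype Gβ := Fintype.ofFinite Gβ
  -- the reduction map
  have hmapsum : ∀ c : Fin n → ZMod (p ^ α), R (∑ i, (a i : ZMod (p ^ α)) * c i)
      = ∑ i, (a i : ZMod (p ^ β)) * R (c i) := by
    intro c
    rw [map_sum]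
    exact Finset.sum_congr rfl fun i _ => by rw [map_mul, map_intCast]
  set Φ : Gα → Gβ := fun c =>
    ⟨fun i => R (c.1 i),
      ⟨(c.2.1).imp fun i hi => ((isUnit_cast_iff p hβ hβα (c.1 i)).mp hi),
        c.2.2.1⟩⟩ with hΦ
  have key : ∀ c0 : Gβ, Nat.card {c : Gα // Φ c = c0} = (p ^ (α - β)) ^ (n - 1) := by
    intro c0
    set c0l : Fin n → ZMod (p ^ α) := fun i => (((c0.1 i).val : ℕ) : ZMod (p ^ α)) with hc0l
    have hlift : ∀ i, R (c0l i) = c0.1 i := by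
      intro i
      rw [hc0l, map_natCast, ZMod.natCast_zmod_val]
    set t : ZMod (p ^ α) := - ∑ i, (a i : ZMod (p ^ α)) * c0l i with ht
    have hRt : R t = 0 := by
      rw [ht, map_neg, hmapsum]
      rw [Finset.sum_congr rfl fun i _ => by rw [hlift i], c0.2.2.2, neg_zero]
    -- fiber ≃ kernel-vector solutions
    set e : {c : Gα // Φ c = c0} →
        {k : Fin n → ZMod (p ^ α) // (∀ i, R (k i) = 0) ∧ ∑ i, (a i : ZMod (p ^ α)) * k i = t} :=
      fun c => ⟨fun i => c.1.1 i - c0l i,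
        by
          intro i
          have h1 : R (c.1.1 i) = c0.1 i := congrFun (congrArg Subtype.val c.2) i
          rw [map_sub, h1, hlift i, sub_self],
        by
          have h2 : ∑ i, (a i : ZMod (p ^ α)) * c.1.1 i = 0 := c.1.2.2.2
          rw [Finset.sum_congr rfl fun i _ => (mul_sub ((a i : ZMod (p ^ α))) _ _ : _),
            Finset.sum_sub_distrib, h2, zero_sub, ht]⟩ with he
    have hb : Function.Bijective e := by
      constructor
      · intro c c' hcc
        apply Subtype.ext; apply Subtype.ext
        funext i
        have h3 : c.1.1 i - c0l i = c'.1.1 i - c0l i := congrFun (congrArg Subtype.val hcc) i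
        have := sub_left_injective h3
        exact this
      · rintro ⟨k, hk1, hk2⟩
        have hcond1 : ∀ i, R (c0l i + k i) = c0.1 i := by
          intro i; rw [map_add, hlift i, hk1 i, add_zero]
        have hcond : (∃ i, IsUnit ((fun i => c0l i + k i) i)) ∧
            (eval (fun i => R ((fun i => c0l i + k i) i)) fβ = 0 ∧
              ∑ i, (a i : ZMod (p ^ β)) * R ((fun i => c0l i + k i) i) = 0) ∧
            ∑ i, (a i : ZMod (p ^ α)) * (c0l i + k i) = 0 := by
          refine ⟨?_, ⟨?_, ?_⟩, ?_⟩
          · obtain ⟨i, hi⟩ := c0.2.1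
            exact ⟨i, (isUnit_cast_iff p hβ hβα _).mpr (by rw [hcond1 i]; exact hi)⟩
          · rw [show (fun i => R (c0l i + k i)) = c0.1 from funext hcond1]
            exact c0.2.2.1
          · rw [Finset.sum_congr rfl fun i _ => by rw [hcond1 i]]
            exact c0.2.2.2
          · rw [Finset.sum_congr rfl fun i _ => (mul_add ((a i : ZMod (p ^ α))) _ _ : _),
              Finset.sum_add_distrib, hk2, ht, add_neg_cancel]
        refine ⟨⟨⟨fun i => c0l i + k i, hcond⟩, ?_⟩, ?_⟩
        · apply Subtype.ext
          funext i
          exact hcond1 i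
        · apply Subtype.ext
          funext i
          simp only [he, add_sub_cancel_left]
    rw [Nat.card_congr (Equiv.ofBijective e hb)]
    exact card_linear_fiber p hβα a j (isUnit_int_cast_zmod_pow_s16 p (le_trans hβ hβα) (a j) hj) t hRt
  have hsig : Nat.card Gα = ∑ c0 : Gβ, Nat.card {c : Gα // Φ c = c0} := by
    rw [← Nat.card_congr (Equiv.sigmaFiberEquiv Φ)]
    haveI : Finite Gα := Subtype.finite
    haveI : Fintype Gα := Fintype.ofFinite Gα
    rw [Nat.card_eq_fintype_card, Fintype.card_sigma]
    simp [Nat.card_eq_fintype_card]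
  rw [hsig, Finset.sum_congr rfl fun c0 _ => key c0, Finset.sum_const, Finset.card_univ,
    smul_eq_mul, Nat.card_eq_fintype_card]
end PartB3

section PartA
variable (p : ℕ) [hp : Fact p.Prime]

lemma norm_sub_val_le_iff (m : ℕ) (y : ℤ_[p]) (c : ZMod (p ^ m)) :
    ‖(y : ℚ_[p]) - ((c.val : ℕ) : ℚ_[p])‖ ≤ (p : ℝ) ^ (-(m : ℤ)) ↔
      PadicInt.toZModPow m y = c := by
  haveI : NeZero (p ^ m) := ⟨pow_ne_zero _ hp.out.ne_zero⟩
  rw [show (y : ℚ_[p]) - ((c.val : ℕ) : ℚ_[p]) = (((y - ((c.val : ℕ) : ℤ_[p])) : ℤ_[p]) : ℚ_[p])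
    by push_cast; ring]
  rw [PadicInt.padic_norm_e_of_padicInt, PadicInt.norm_le_pow_iff_mem_span_pow,
    ← PadicInt.ker_toZModPow, RingHom.mem_ker, map_sub, map_natCast, ZMod.natCast_zmod_val,
    sub_eq_zero]

lemma norm_eq_one_iff_isUnit {α : ℕ} (hα : 1 ≤ α) (y : ℤ_[p]) (c : ZMod (p ^ α))
    (hy : PadicInt.toZModPow α y = c) : ‖(y : ℚ_[p])‖ = 1 ↔ IsUnit c := by
  haveI : NeZero (p ^ α) := ⟨pow_ne_zero _ hp.out.ne_zero⟩
  haveI : NeZero (p ^ 1) := ⟨pow_ne_zero _ hp.out.ne_zero⟩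
  rw [PadicInt.padic_norm_e_of_padicInt, isUnit_zmod_pow_iff p hα]
  have hle : ‖y‖ ≤ 1 := y.norm_le_one
  have hdvd : p ∣ c.val ↔ ‖y‖ < 1 := by
    have h3 : ((p : ℤ_[p]) ∣ y) ↔ PadicInt.toZModPow 1 y = 0 := by
      rw [← Ideal.mem_span_singleton,
        show ((p : ℤ_[p])) = ((p : ℤ_[p]) ^ 1) by rw [pow_one], ← PadicInt.ker_toZModPow,
        RingHom.mem_ker]
    rw [PadicInt.norm_lt_one_iff_dvd, h3]
    have h1 : PadicInt.toZModPow 1 y = ZMod.castHom (pow_dvd_pow p hα) (ZMod (p ^ 1))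
        (PadicInt.toZModPow α y) := by
      rw [← RingHom.comp_apply, PadicInt.zmod_cast_comp_toZModPow 1 α hα]
    have h2 : ZMod.castHom (pow_dvd_pow p hα) (ZMod (p ^ 1)) c = ((c.val : ℕ) : ZMod (p ^ 1)) := by
      conv_lhs => rw [← ZMod.natCast_zmod_val c]
      rw [map_natCast]
    rw [h1, hy, h2, ZMod.natCast_eq_zero_iff, pow_one]
  rw [hdvd]
  constructor
  · intro h; rw [h]; exact lt_irrefl 1
  · intro h; exact le_antisymm hle (not_lt.mp h)
end PartA

section Bridge
variable (p : ℕ) [hp : Fact p.Prime]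

lemma eps_le_one (α : ℕ) : ((p : ℝ)) ^ (-(α : ℤ)) ≤ 1 := by
  apply zpow_le_one_of_nonpos₀
  · exact_mod_cast hp.out.one_le
  · omega

lemma bridge {n : ℕ} (hn : 1 ≤ n) {α β : ℕ} (hβ : 1 ≤ β) (hβα : β ≤ α)
    (f : MvPolynomial (Fin n) ℤ) (a : Fin n → ℤ)
    (c : Fin n → ZMod (p ^ α)) (x : Fin n → ℚ_[p])
    (hx : ∀ i, ‖x i - (((c i).val : ℕ) : ℚ_[p])‖ ≤ (p : ℝ) ^ (-(α : ℤ))) :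
    (‖x‖ = 1 ∧
      ‖eval x (map (Int.castRingHom ℚ_[p]) f)‖ ≤ (p : ℝ) ^ (-(β : ℤ)) ∧
      ‖∑ i, (a i : ℚ_[p]) * x i‖ ≤ (p : ℝ) ^ (-(α : ℤ)))
    ↔ ((∃ i, IsUnit (c i)) ∧
        (eval (fun i => ZMod.castHom (pow_dvd_pow p hβα) (ZMod (p ^ β)) (c i))
            (map (Int.castRingHom (ZMod (p ^ β))) f) = 0 ∧
          ∑ i, (a i : ZMod (p ^ β)) * ZMod.castHom (pow_dvd_pow p hβα) (ZMod (p ^ β)) (c i) = 0) ∧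
        ∑ i, (a i : ZMod (p ^ α)) * c i = 0) := by
  have hα : 1 ≤ α := le_trans hβ hβα
  have hx1 : ∀ i, ‖x i‖ ≤ 1 := by
    intro i
    have h1 : x i = (x i - (((c i).val : ℕ) : ℚ_[p])) + (((c i).val : ℕ) : ℚ_[p]) := by ring
    rw [h1]
    refine le_trans (Padic.nonarchimedean _ _) (max_le ?_ ?_)
    · exact le_trans (hx i) (eps_le_one p α)
    · have := Padic.norm_int_le_one (p := p) ((c i).val : ℤ)
      rwa [Int.cast_natCast] at this
  set y : Fin n → ℤ_[p] := fun i => ⟨x i, hx1 i⟩ with hydef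
  have hy : ∀ i, PadicInt.toZModPow α (y i) = c i := by
    intro i
    exact (norm_sub_val_le_iff p α (y i) (c i)).mp (hx i)
  have hyβ : ∀ i, PadicInt.toZModPow β (y i)
      = ZMod.castHom (pow_dvd_pow p hβα) (ZMod (p ^ β)) (c i) := by
    intro i
    rw [← hy i, ← RingHom.comp_apply, PadicInt.zmod_cast_comp_toZModPow β α hβα]
  -- (i) the norm-one condition
  have hiff1 : ‖x‖ = 1 ↔ ∃ i, IsUnit (c i) := by
    have hxile : ‖x‖ ≤ 1 := (pi_norm_le_iff_of_nonneg zero_le_one).mpr hx1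
    have hunit : ∀ i, ‖x i‖ = 1 ↔ IsUnit (c i) := fun i =>
      norm_eq_one_iff_isUnit p hα (y i) (c i) (hy i)
    constructor
    · intro h
      haveI : Nonempty (Fin n) := ⟨⟨0, hn⟩⟩
      obtain ⟨i, -, hi⟩ := Finset.exists_mem_eq_sup Finset.univ Finset.univ_nonempty
        (fun i => ‖x i‖₊)
      have : ‖x‖ = ‖x i‖ := by
        rw [Pi.norm_def, hi]; rfl
      exact ⟨i, (hunit i).mp (by rw [← this, h])⟩
    · rintro ⟨i, hi⟩
      refine le_antisymm hxile ?_
      have := (hunit i).mpr hi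
      calc (1:ℝ) = ‖x i‖ := this.symm
        _ ≤ ‖x‖ := norm_le_pi_norm x i
  -- (ii) the polynomial condition
  have hiff2 : ‖eval x (map (Int.castRingHom ℚ_[p]) f)‖ ≤ (p : ℝ) ^ (-(β : ℤ)) ↔
      eval (fun i => ZMod.castHom (pow_dvd_pow p hβα) (ZMod (p ^ β)) (c i))
        (map (Int.castRingHom (ZMod (p ^ β))) f) = 0 := by
    have hcoe : eval x (map (Int.castRingHom ℚ_[p]) f)
        = ((eval y (map (Int.castRingHom ℤ_[p]) f) : ℤ_[p]) : ℚ_[p]) := by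
      rw [eval_map, eval_map,
        show ((eval₂ (Int.castRingHom ℤ_[p]) y f : ℤ_[p]) : ℚ_[p])
          = PadicInt.Coe.ringHom (eval₂ (Int.castRingHom ℤ_[p]) y f) from rfl,
        eval₂_comp_left PadicInt.Coe.ringHom (Int.castRingHom ℤ_[p]) y f]
      congr 1
    have hred : PadicInt.toZModPow β (eval y (map (Int.castRingHom ℤ_[p]) f))
        = eval (fun i => ZMod.castHom (pow_dvd_pow p hβα) (ZMod (p ^ β)) (c i))
            (map (Int.castRingHom (ZMod (p ^ β))) f) := by
      rw [eval_map, eval_map,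
        eval₂_comp_left (PadicInt.toZModPow β) (Int.castRingHom ℤ_[p]) y f]
      congr 1
      · exact Subsingleton.elim _ _
      · funext i
        exact hyβ i
    rw [hcoe, PadicInt.padic_norm_e_of_padicInt, PadicInt.norm_le_pow_iff_mem_span_pow,
      ← PadicInt.ker_toZModPow, RingHom.mem_ker, hred]
  -- (iii) the linear condition
  have hiff3 : ‖∑ i, (a i : ℚ_[p]) * x i‖ ≤ (p : ℝ) ^ (-(α : ℤ)) ↔
      ∑ i, (a i : ZMod (p ^ α)) * c i = 0 := by
    have hcoe2 : ∑ i, (a i : ℚ_[p]) * x i = ((∑ i, (a i : ℤ_[p]) * y i : ℤ_[p]) : ℚ_[p]) := by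
      rw [show ((∑ i, (a i : ℤ_[p]) * y i : ℤ_[p]) : ℚ_[p])
          = PadicInt.Coe.ringHom (∑ i, (a i : ℤ_[p]) * y i) from rfl, map_sum]
      refine Finset.sum_congr rfl fun i _ => ?_
      rw [map_mul, map_intCast]
      rfl
    have hred2 : PadicInt.toZModPow α (∑ i, (a i : ℤ_[p]) * y i)
        = ∑ i, (a i : ZMod (p ^ α)) * c i := by
      rw [map_sum]
      exact Finset.sum_congr rfl fun i _ => by rw [map_mul, map_intCast, hy i]
    rw [hcoe2, PadicInt.padic_norm_e_of_padicInt, PadicInt.norm_le_pow_iff_mem_span_pow,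
      ← PadicInt.ker_toZModPow, RingHom.mem_ker, hred2]
  -- derived β-level sum condition
  have hder : (∑ i, (a i : ZMod (p ^ α)) * c i = 0) →
      ∑ i, (a i : ZMod (p ^ β)) * ZMod.castHom (pow_dvd_pow p hβα) (ZMod (p ^ β)) (c i) = 0 := by
    intro h
    have := congrArg (ZMod.castHom (pow_dvd_pow p hβα) (ZMod (p ^ β))) h
    rw [map_zero, map_sum] at this
    rw [← this]
    exact Finset.sum_congr rfl fun i _ => by rw [map_mul, map_intCast]
  constructor
  · rintro ⟨h1, h2, h3⟩
    exact ⟨hiff1.mp h1, ⟨hiff2.mp h2, hder (hiff3.mp h3)⟩, hiff3.mp h3⟩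
  · rintro ⟨h1, ⟨h2, -⟩, h3⟩
    exact ⟨hiff1.mpr h1, hiff2.mpr h2, hiff3.mpr h3⟩
end Bridge

section MeasurePart
open scoped ENNReal
variable (p : ℕ) [hp : Fact p.Prime] {n : ℕ}

/-- residue ball: points of `ℚ_pⁿ` reducing to `c` mod `p^α`. -/
def resBall (α : ℕ) (c : Fin n → ZMod (p ^ α)) : Set (Fin n → ℚ_[p]) :=
  {x | ∀ i, ‖x i - (((c i).val : ℕ) : ℚ_[p])‖ ≤ (p : ℝ) ^ (-(α : ℤ))}

lemma resBall_isClosed (α : ℕ) (c : Fin n → ZMod (p ^ α)) : IsClosed (resBall p α c) := by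
  have : resBall p α c = ⋂ i, {x : Fin n → ℚ_[p] |
      ‖x i - (((c i).val : ℕ) : ℚ_[p])‖ ≤ (p : ℝ) ^ (-(α : ℤ))} := by
    ext x; simp [resBall, Set.mem_iInter]
  rw [this]
  exact isClosed_iInter fun i =>
    isClosed_le (((continuous_apply i).sub continuous_const).norm) continuous_const

lemma mem_resBall_norm_le_one {α : ℕ} {c : Fin n → ZMod (p ^ α)} {x : Fin n → ℚ_[p]}
    (hx : x ∈ resBall p α c) (i : Fin n) : ‖x i‖ ≤ 1 := by
  have h1 : x i = (x i - (((c i).val : ℕ) : ℚ_[p])) + (((c i).val : ℕ) : ℚ_[p]) := by ring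
  rw [h1]
  refine le_trans (Padic.nonarchimedean _ _) (max_le ?_ ?_)
  · exact le_trans (hx i) (eps_le_one p α)
  · have := Padic.norm_int_le_one (p := p) ((c i).val : ℤ)
    rwa [Int.cast_natCast] at this

lemma resBall_disjoint (α : ℕ) : Pairwise (Function.onFun Disjoint (resBall p (n := n) α)) := by
  haveI : NeZero (p ^ α) := ⟨pow_ne_zero _ hp.out.ne_zero⟩
  intro c c' hne
  refine Set.disjoint_left.mpr fun x hx hx' => ?_
  apply hne
  funext i
  have hd : ‖(((c i).val : ℕ) : ℚ_[p]) - (((c' i).val : ℕ) : ℚ_[p])‖ ≤ (p : ℝ) ^ (-(α : ℤ)) := by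
    have h1 : (((c i).val : ℕ) : ℚ_[p]) - (((c' i).val : ℕ) : ℚ_[p])
        = (x i - (((c' i).val : ℕ) : ℚ_[p])) + (-(x i - (((c i).val : ℕ) : ℚ_[p]))) := by ring
    rw [h1]
    refine le_trans (Padic.nonarchimedean _ _) (max_le (hx' i) ?_)
    rw [norm_neg]; exact hx i
  have hdint : ((p : ℤ) ^ α) ∣ (((c i).val : ℤ) - ((c' i).val : ℤ)) := by
    rw [← Padic.norm_int_le_pow_iff_dvd]
    have : ((((c i).val : ℤ) - ((c' i).val : ℤ) : ℤ) : ℚ_[p])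
        = (((c i).val : ℕ) : ℚ_[p]) - (((c' i).val : ℕ) : ℚ_[p]) := by push_cast; ring
    rw [this]
    exact hd
  have hzero : ((((c i).val : ℤ) - ((c' i).val : ℤ) : ℤ) : ZMod (p ^ α)) = 0 := by
    rw [ZMod.intCast_zmod_eq_zero_iff_dvd]
    exact_mod_cast hdint
  rw [Int.cast_sub, Int.cast_natCast, Int.cast_natCast, ZMod.natCast_zmod_val,
    ZMod.natCast_zmod_val, sub_eq_zero] at hzero
  exact hzero

lemma unit_ball_eq_union (α : ℕ) :
    {x : Fin n → ℚ_[p] | ∀ i, ‖x i‖ ≤ 1} = ⋃ c : Fin n → ZMod (p ^ α), resBall p α c := by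
  ext x
  constructor
  · intro hx
    refine Set.mem_iUnion.mpr ⟨fun i => PadicInt.toZModPow α ⟨x i, hx i⟩, fun i => ?_⟩
    exact (norm_sub_val_le_iff p α ⟨x i, hx i⟩ _).mpr rfl
  · intro hx
    obtain ⟨c, hc⟩ := Set.mem_iUnion.mp hx
    exact fun i => mem_resBall_norm_le_one p hc i

variable [MeasurableSpace (Fin n → ℚ_[p])] [BorelSpace (Fin n → ℚ_[p])]
variable (μ : Measure (Fin n → ℚ_[p])) [μ.IsAddHaarMeasure]

lemma resBall_measure (α : ℕ) (c : Fin n → ZMod (p ^ α)) :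
    μ (resBall p α c) = μ {x : Fin n → ℚ_[p] | ∀ i, ‖x i‖ ≤ (p : ℝ) ^ (-(α : ℤ))} := by
  have h1 : resBall p α c
      = (fun x : Fin n → ℚ_[p] => x + (fun i => -((((c i).val : ℕ) : ℚ_[p]))))
        ⁻¹' {x : Fin n → ℚ_[p] | ∀ i, ‖x i‖ ≤ (p : ℝ) ^ (-(α : ℤ))} := by
    ext x
    simp only [resBall, Set.mem_preimage, Set.mem_setOf_eq, Pi.add_apply, sub_eq_add_neg]
  rw [h1, measure_preimage_add_right]

lemma measure_small_ball (hμ : μ {x : Fin n → ℚ_[p] | ∀ i, ‖x i‖ ≤ 1} = 1) (α : ℕ) :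
    μ {x : Fin n → ℚ_[p] | ∀ i, ‖x i‖ ≤ (p : ℝ) ^ (-(α : ℤ))}
      = ((((p ^ α) ^ n : ℕ) : ℝ≥0∞))⁻¹ := by
  haveI : NeZero (p ^ α) := ⟨pow_ne_zero _ hp.out.ne_zero⟩
  have hme : ∀ c : Fin n → ZMod (p ^ α), MeasurableSet (resBall p α c) :=
    fun c => (resBall_isClosed p α c).measurableSet
  have h2 : μ {x : Fin n → ℚ_[p] | ∀ i, ‖x i‖ ≤ 1}
      = ∑' c : Fin n → ZMod (p ^ α), μ (resBall p α c) := by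
    rw [unit_ball_eq_union p α, measure_iUnion (resBall_disjoint p α) hme]
  rw [hμ, tsum_fintype] at h2
  have h3 : ∀ c : Fin n → ZMod (p ^ α), μ (resBall p α c)
      = μ {x : Fin n → ℚ_[p] | ∀ i, ‖x i‖ ≤ (p : ℝ) ^ (-(α : ℤ))} :=
    fun c => resBall_measure p μ α c
  rw [Finset.sum_congr rfl fun c _ => h3 c, Finset.sum_const, Finset.card_univ] at h2
  have hcard : Fintype.card (Fin n → ZMod (p ^ α)) = (p ^ α) ^ n := by
    rw [Fintype.card_fun, ZMod.card, Fintype.card_fin]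
  rw [hcard, nsmul_eq_mul] at h2
  have h4 := h2.symm
  rw [mul_comm] at h4
  exact ENNReal.eq_inv_of_mul_eq_one_left h4

lemma measure_union_resBall (hμ : μ {x : Fin n → ℚ_[p] | ∀ i, ‖x i‖ ≤ 1} = 1) (α : ℕ)
    (G : Set (Fin n → ZMod (p ^ α))) :
    μ (⋃ c : G, resBall p α c.1)
      = (Nat.card G : ℝ≥0∞) * ((((p ^ α) ^ n : ℕ) : ℝ≥0∞))⁻¹ := by
  haveI : Finite G := Subtype.finite
  haveI : Fintype G := Fintype.ofFinite G
  rw [measure_iUnion (fun (c c' : G) (hne : c ≠ c') =>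
      resBall_disjoint p α (Subtype.coe_ne_coe.mpr hne))
    (fun (c : G) => (resBall_isClosed p α (c : Fin n → ZMod (p ^ α))).measurableSet),
    tsum_fintype]
  rw [Finset.sum_congr rfl fun (c : G) _ => by
      rw [resBall_measure p μ α (c : Fin n → ZMod (p ^ α)), measure_small_ball p μ hμ α],
    Finset.sum_const, Finset.card_univ, nsmul_eq_mul, Nat.card_eq_fintype_card]
end MeasurePart

section PartC2
variable (p : ℕ) [hp : Fact p.Prime]

lemma card_Gbeta {β : ℕ} (hβ : 1 ≤ β) {n d : ℕ}
    (f : MvPolynomial (Fin n) ℤ) (hf : f.IsHomogeneous d) (a : Fin n → ℤ) :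
    Nat.card {c0 : Fin n → ZMod (p ^ β) //
        (∃ i, IsUnit (c0 i)) ∧
        (eval c0 (map (Int.castRingHom (ZMod (p ^ β))) f) = 0 ∧
          ∑ i, (a i : ZMod (p ^ β)) * c0 i = 0)}
      = projCard (ZMod (p ^ β)) (fun x =>
          eval x (map (Int.castRingHom (ZMod (p ^ β))) f) = 0 ∧
          (∑ i, (a i : ZMod (p ^ β)) * x i) = 0) * (p ^ (β - 1) * (p - 1)) := by
  haveI : NeZero (p ^ β) := ⟨pow_ne_zero _ hp.out.ne_zero⟩
  have hP : ∀ (u : (ZMod (p ^ β))ˣ) (x : Fin n → ZMod (p ^ β)),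
      ((∃ i, IsUnit (x i)) ∧
        (eval x (map (Int.castRingHom (ZMod (p ^ β))) f) = 0 ∧
          ∑ i, (a i : ZMod (p ^ β)) * x i = 0)) →
      (eval (fun i => (u : ZMod (p ^ β)) * x i) (map (Int.castRingHom (ZMod (p ^ β))) f) = 0 ∧
        ∑ i, (a i : ZMod (p ^ β)) * ((u : ZMod (p ^ β)) * x i) = 0) := by
    rintro u x ⟨-, h1, h2⟩
    constructor
    · rw [eval_mul_of_isHomogeneous _ (hf.map _) _ x, h1, mul_zero]
    · rw [Finset.sum_congr rfl fun i _ =>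
        (mul_left_comm ((a i : ZMod (p ^ β))) ((u : ZMod (p ^ β))) (x i) : _),
        ← Finset.mul_sum, h2, mul_zero]
  rw [card_primitive_eq_projCard_mul _ hP]
  congr 1
  rw [Nat.card_eq_fintype_card, ZMod.card_units_eq_totient, Nat.totient_prime_pow hp.out hβ]
end PartC2

/-- for `1 ≤ β ≤ α`, `f` homogeneous of degree `d` with `Z_f` and
`Z_{f,a} = Z_f ∩ H_a` smooth over `ℤ_p` and `a ∉ pℤ_pⁿ`, the set
`V(α,β) = {x ∈ ℤ_pⁿ : ‖x‖ = 1, p^β | f(x), p^α | ⟨a,x⟩}` has volume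
`p^{-α} p^{(2-n)β} (1 - 1/p) #Z_{f,a}(ℤ/p^βℤ)`. -/
theorem stmt_16 (p : ℕ) [hp : Fact p.Prime] (n d : ℕ) (hn : 3 ≤ n) (hd : 1 ≤ d)
    [MeasurableSpace (Fin n → ℚ_[p])] [BorelSpace (Fin n → ℚ_[p])]
    (μ : Measure (Fin n → ℚ_[p])) [μ.IsAddHaarMeasure]
    (hμ : μ {x : Fin n → ℚ_[p] | ∀ i, ‖x i‖ ≤ 1} = 1)
    (f : MvPolynomial (Fin n) ℤ) (hf : f.IsHomogeneous d)
    (a : Fin n → ℤ) (ha : ¬ ∀ i, (p : ℤ) ∣ a i)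
    -- smoothness of `Z_f` over `ℤ_p`:
    (hsmooth : ∀ x : Fin n → ZMod p, x ≠ 0 →
      eval x (map (Int.castRingHom (ZMod p)) f) = 0 →
      ∃ i, eval x (pderiv i (map (Int.castRingHom (ZMod p)) f)) ≠ 0)
    -- smoothness of `Z_{f,a}` over `ℤ_p`: at common zeros of `f` and `⟨a,·⟩`,
    -- the gradient `∇f` is not proportional to `a` mod `p`:
    (hsmooth' : ∀ x : Fin n → ZMod p, x ≠ 0 →
      eval x (map (Int.castRingHom (ZMod p)) f) = 0 →
      (∑ i, (a i : ZMod p) * x i) = 0 →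
      ¬ ∃ c : ZMod p, ∀ i,
        eval x (pderiv i (map (Int.castRingHom (ZMod p)) f)) = c * (a i : ZMod p))
    (α β : ℕ) (hβ : 1 ≤ β) (hβα : β ≤ α) :
    μ {x : Fin n → ℚ_[p] | ‖x‖ = 1 ∧
        ‖eval x (map (Int.castRingHom ℚ_[p]) f)‖ ≤ (p : ℝ) ^ (-(β : ℤ)) ∧
        ‖∑ i, (a i : ℚ_[p]) * x i‖ ≤ (p : ℝ) ^ (-(α : ℤ))}
      = ENNReal.ofReal ((p : ℝ) ^ (-(α : ℤ)) * (p : ℝ) ^ (((2 : ℤ) - n) * β) *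
          (1 - 1 / p) *
          (projCard (ZMod (p ^ β)) (fun x =>
            eval x (map (Int.castRingHom (ZMod (p ^ β))) f) = 0 ∧
            (∑ i, (a i : ZMod (p ^ β)) * x i) = 0) : ℝ)) := by
  classical
  have hn1 : 1 ≤ n := by omega
  obtain ⟨j, hj⟩ : ∃ j, ¬ (p : ℤ) ∣ a j := not_forall.mp ha
  set G : Set (Fin n → ZMod (p ^ α)) := {c | (∃ i, IsUnit (c i)) ∧
      (eval (fun i => ZMod.castHom (pow_dvd_pow p hβα) (ZMod (p ^ β)) (c i))
          (map (Int.castRingHom (ZMod (p ^ β))) f) = 0 ∧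
        ∑ i, (a i : ZMod (p ^ β)) * ZMod.castHom (pow_dvd_pow p hβα) (ZMod (p ^ β)) (c i) = 0) ∧
      ∑ i, (a i : ZMod (p ^ α)) * c i = 0} with hG
  -- the set is a union of residue balls
  have hSU : {x : Fin n → ℚ_[p] | ‖x‖ = 1 ∧
        ‖eval x (map (Int.castRingHom ℚ_[p]) f)‖ ≤ (p : ℝ) ^ (-(β : ℤ)) ∧
        ‖∑ i, (a i : ℚ_[p]) * x i‖ ≤ (p : ℝ) ^ (-(α : ℤ))}
      = ⋃ c : G, resBall p α (c : Fin n → ZMod (p ^ α)) := by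
    ext x
    constructor
    · intro hx
      have hx1 : ∀ i, ‖x i‖ ≤ 1 := fun i => le_trans (norm_le_pi_norm x i) (le_of_eq hx.1)
      have hmem : x ∈ ⋃ c : Fin n → ZMod (p ^ α), resBall p α c := by
        rw [← unit_ball_eq_union p α]; exact hx1
      obtain ⟨c, hc⟩ := Set.mem_iUnion.mp hmem
      exact Set.mem_iUnion.mpr ⟨⟨c, (bridge p hn1 hβ hβα f a c x hc).mp hx⟩, hc⟩
    · intro hx
      obtain ⟨c, hc⟩ := Set.mem_iUnion.mp hx
      exact (bridge p hn1 hβ hβα f a (c : Fin n → ZMod (p ^ α)) x hc).mpr c.2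
  rw [hSU, measure_union_resBall p μ hμ α G]
  -- counting
  set Pc : ℕ := projCard (ZMod (p ^ β)) (fun x =>
      eval x (map (Int.castRingHom (ZMod (p ^ β))) f) = 0 ∧
      (∑ i, (a i : ZMod (p ^ β)) * x i) = 0) with hPc
  have hcount : Nat.card G = Pc * (p ^ (β - 1) * (p - 1)) * (p ^ (α - β)) ^ (n - 1) := by
    have h1 : Nat.card G = Nat.card {c : Fin n → ZMod (p ^ α) //
        (∃ i, IsUnit (c i)) ∧
        (eval (fun i => ZMod.castHom (pow_dvd_pow p hβα) (ZMod (p ^ β)) (c i))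
            (map (Int.castRingHom (ZMod (p ^ β))) f) = 0 ∧
          ∑ i, (a i : ZMod (p ^ β)) * ZMod.castHom (pow_dvd_pow p hβα) (ZMod (p ^ β)) (c i) = 0) ∧
        ∑ i, (a i : ZMod (p ^ α)) * c i = 0} := rfl
    rw [h1, card_lift p hβα (map (Int.castRingHom (ZMod (p ^ β))) f) a hβ j hj,
      card_Gbeta p hβ f hf a]
  rw [hcount]
  -- the numerical identity
  set q : ℝ := (p : ℝ) with hqdef
  have hq : (0 : ℝ) < q := by
    rw [hqdef]; exact_mod_cast hp.out.pos
  have hq1 : q ≠ 0 := ne_of_gt hq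
  have hMpos : (0 : ℝ) < (((p ^ α) ^ n : ℕ) : ℝ) := by
    have : 0 < (p ^ α) ^ n := pow_pos (pow_pos hp.out.pos α) n
    exact_mod_cast this
  -- convert to ofReal
  rw [show ((Pc * (p ^ (β - 1) * (p - 1)) * (p ^ (α - β)) ^ (n - 1) : ℕ) : ℝ≥0∞)
      = ENNReal.ofReal ((Pc * (p ^ (β - 1) * (p - 1)) * (p ^ (α - β)) ^ (n - 1) : ℕ) : ℝ)
      from (ENNReal.ofReal_natCast _).symm,
    show ((((p ^ α) ^ n : ℕ) : ℝ≥0∞))⁻¹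
      = (ENNReal.ofReal ((((p ^ α) ^ n : ℕ)) : ℝ))⁻¹ by rw [ENNReal.ofReal_natCast],
    ← ENNReal.ofReal_inv_of_pos hMpos,
    ← ENNReal.ofReal_mul (by positivity)]
  congr 1
  -- now a real-number identity
  have e1 : q ^ (β - 1) = q ^ ((β : ℤ) - 1) := by
    rw [← zpow_natCast q (β - 1), Nat.cast_sub hβ, Nat.cast_one]
  have e2 : (q ^ (α - β)) ^ (n - 1) = q ^ (((α : ℤ) - β) * ((n : ℤ) - 1)) := by
    rw [← pow_mul, ← zpow_natCast q ((α - β) * (n - 1)), Nat.cast_mul,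
      Nat.cast_sub hβα, Nat.cast_sub hn1, Nat.cast_one]
  have e3 : ((q ^ α) ^ n)⁻¹ = q ^ (-((α : ℤ) * n)) := by
    rw [← pow_mul, ← zpow_natCast q (α * n), ← zpow_neg, Nat.cast_mul]
  have e5 : (1 : ℝ) - 1 / q = (q - 1) * q ^ (-1 : ℤ) := by
    rw [zpow_neg_one]
    field_simp
  have main : (Pc : ℝ) * (q ^ ((β : ℤ) - 1) * (q - 1)) * q ^ (((α : ℤ) - β) * ((n : ℤ) - 1))
      * q ^ (-((α : ℤ) * n))
      = q ^ (-(α : ℤ)) * q ^ (((2 : ℤ) - n) * β) * ((q - 1) * q ^ (-1 : ℤ)) * (Pc : ℝ) := by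
    calc (Pc : ℝ) * (q ^ ((β : ℤ) - 1) * (q - 1)) * q ^ (((α : ℤ) - β) * ((n : ℤ) - 1))
        * q ^ (-((α : ℤ) * n))
        = (Pc : ℝ) * (q - 1) *
          (q ^ ((β : ℤ) - 1) * q ^ (((α : ℤ) - β) * ((n : ℤ) - 1)) * q ^ (-((α : ℤ) * n))) := by
          ring
      _ = (Pc : ℝ) * (q - 1) *
          q ^ (((β : ℤ) - 1) + ((α : ℤ) - β) * ((n : ℤ) - 1) + -((α : ℤ) * n)) := by
          rw [zpow_add₀ hq1, zpow_add₀ hq1]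
      _ = (Pc : ℝ) * (q - 1) * q ^ ((-(α : ℤ)) + ((2 : ℤ) - n) * β + (-1)) := by
          congr 1
          ring
      _ = (Pc : ℝ) * (q - 1) * (q ^ (-(α : ℤ)) * q ^ (((2 : ℤ) - n) * β) * q ^ (-1 : ℤ)) := by
          rw [zpow_add₀ hq1, zpow_add₀ hq1]
      _ = q ^ (-(α : ℤ)) * q ^ (((2 : ℤ) - n) * β) * ((q - 1) * q ^ (-1 : ℤ)) * (Pc : ℝ) := by
          ring
  push_cast [Nat.cast_sub hp.out.one_le]
  rw [e1, e2, e3, e5]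
  exact main
end

section
/- Define I(α,β) for α ≥ 1, 0 ≤ β ≤ α as the integral of ψ_a over {x ∈ Q_p^n : ‖x‖_p = p^α, |f(x)|_p ≤ p^{dα-β}}, under the hypotheses that Z_f and Z_{f,a} are smooth over Z_p and a ∈ Z^n \ pZ^n. Then I(α,β) = 0 whenever 1 ≤ β < α. -/
open MvPolynomial MeasureTheory

lemma aux_eval_scale {S : Type*} [CommSemiring S] {n m : ℕ} {F : MvPolynomial (Fin n) S}
    (hF : F.IsHomogeneous m) (c : S) (x : Fin n → S) :
    eval (fun i => c * x i) F = c ^ m * eval x F := by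
  rw [eval_eq, eval_eq, Finset.mul_sum]
  refine Finset.sum_congr rfl fun dd hdd => ?_
  rw [mem_support_iff] at hdd
  have hdeg : ∑ i ∈ dd.support, dd i = m := by
    simpa [Finsupp.weight_apply, Finsupp.sum] using hF hdd
  calc coeff dd F * ∏ i ∈ dd.support, (c * x i) ^ dd i
      = coeff dd F * ((∏ i ∈ dd.support, c ^ dd i) * ∏ i ∈ dd.support, x i ^ dd i) := by
        rw [← Finset.prod_mul_distrib]; simp_rw [mul_pow]
    _ = c ^ m * (coeff dd F * ∏ i ∈ dd.support, x i ^ dd i) := by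
        rw [Finset.prod_pow_eq_pow_sum, hdeg]; ring

lemma aux_diff (p : ℕ) [Fact p.Prime] {n : ℕ} (g : MvPolynomial (Fin n) ℤ)
    (r : ℝ) (hr0 : 0 ≤ r) (hr : r ≤ 1) :
    ∀ (u v : Fin n → ℚ_[p]), (∀ i, ‖u i‖ ≤ 1) → (∀ i, ‖v i - u i‖ ≤ r) →
    ‖eval u (map (Int.castRingHom ℚ_[p]) g)‖ ≤ 1 ∧
    ‖eval v (map (Int.castRingHom ℚ_[p]) g) - eval u (map (Int.castRingHom ℚ_[p]) g)‖ ≤ r := by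
  induction g using MvPolynomial.induction_on with
  | C a =>
      intro u v hu hv
      simp only [map_C, eval_C]
      exact ⟨by simpa using Padic.norm_int_le_one a, by simpa using hr0⟩
  | add q1 q2 h1 h2 =>
      intro u v hu hv
      obtain ⟨h1a, h1b⟩ := h1 u v hu hv
      obtain ⟨h2a, h2b⟩ := h2 u v hu hv
      simp only [map_add, RingHom.map_add, eval_add] at *
      constructor
      · exact le_trans (Padic.nonarchimedean _ _) (max_le h1a h2a)
      · have : eval v (map (Int.castRingHom ℚ_[p]) q1) + eval v (map (Int.castRingHom ℚ_[p]) q2)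
            - (eval u (map (Int.castRingHom ℚ_[p]) q1) + eval u (map (Int.castRingHom ℚ_[p]) q2))
            = (eval v (map (Int.castRingHom ℚ_[p]) q1) - eval u (map (Int.castRingHom ℚ_[p]) q1))
            + (eval v (map (Int.castRingHom ℚ_[p]) q2) - eval u (map (Int.castRingHom ℚ_[p]) q2)) := by
          ring
        rw [this]
        exact le_trans (Padic.nonarchimedean _ _) (max_le h1b h2b)
  | mul_X q i h =>
      intro u v hu hv
      obtain ⟨ha, hb⟩ := h u v hu hv
      have hvi : ∀ j, ‖v j‖ ≤ 1 := by
        intro j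
        have : v j = (v j - u j) + u j := by ring
        rw [this]
        exact le_trans (Padic.nonarchimedean _ _) (max_le (le_trans (hv j) hr) (hu j))
      simp only [map_mul, map_X, eval_mul, eval_X]
      constructor
      · calc ‖eval u (map (Int.castRingHom ℚ_[p]) q) * u i‖
            = ‖eval u (map (Int.castRingHom ℚ_[p]) q)‖ * ‖u i‖ := norm_mul _ _
          _ ≤ 1 * 1 := mul_le_mul ha (hu i) (norm_nonneg _) zero_le_one
          _ = 1 := one_mul 1
      · have hrw : eval v (map (Int.castRingHom ℚ_[p]) q) * v i
            - eval u (map (Int.castRingHom ℚ_[p]) q) * u i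
            = (eval v (map (Int.castRingHom ℚ_[p]) q) - eval u (map (Int.castRingHom ℚ_[p]) q)) * v i
            + eval u (map (Int.castRingHom ℚ_[p]) q) * (v i - u i) := by ring
        rw [hrw]
        refine le_trans (Padic.nonarchimedean _ _) (max_le ?_ ?_)
        · rw [norm_mul]
          calc ‖_‖ * ‖v i‖ ≤ r * 1 := mul_le_mul hb (hvi i) (norm_nonneg _) hr0
            _ = r := mul_one r
        · rw [norm_mul]
          calc ‖_‖ * ‖v i - u i‖ ≤ 1 * r := mul_le_mul ha (hv i) (norm_nonneg _) zero_le_one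
            _ = r := one_mul r

lemma aux_ult (p : ℕ) [Fact p.Prime] {n : ℕ} (u v : Fin n → ℚ_[p]) :
    ‖u + v‖ ≤ max ‖u‖ ‖v‖ := by
  refine (pi_norm_le_iff_of_nonneg (le_max_of_le_left (norm_nonneg _))).mpr fun i => ?_
  exact le_trans (Padic.nonarchimedean _ _)
    (max_le_max (norm_le_pi_norm u i) (norm_le_pi_norm v i))

lemma aux_step (p : ℕ) [hp : Fact p.Prime] {n d : ℕ} (f : MvPolynomial (Fin n) ℤ)
    (hf : f.IsHomogeneous d) (α β : ℕ) (hβ : 1 ≤ β) (hβα : β < α)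
    (x w : Fin n → ℚ_[p]) (hw : ∀ i, ‖w i‖ ≤ (p : ℝ) ^ ((α : ℤ) - β))
    (hx : ‖x‖ = (p : ℝ) ^ (α : ℤ))
    (hfx : ‖eval x (map (Int.castRingHom ℚ_[p]) f)‖ ≤ (p : ℝ) ^ ((d * α : ℤ) - β)) :
    ‖x + w‖ = (p : ℝ) ^ (α : ℤ) ∧
    ‖eval (x + w) (map (Int.castRingHom ℚ_[p]) f)‖ ≤ (p : ℝ) ^ ((d * α : ℤ) - β) := by
  have hp1 : (1 : ℝ) < (p : ℝ) := by exact_mod_cast hp.out.one_lt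
  have hp0 : (0 : ℝ) < (p : ℝ) := lt_trans one_pos hp1
  have hwn : ‖w‖ ≤ (p : ℝ) ^ ((α : ℤ) - β) :=
    (pi_norm_le_iff_of_nonneg (by positivity)).mpr hw
  have hlt : (p : ℝ) ^ ((α : ℤ) - β) < (p : ℝ) ^ (α : ℤ) :=
    zpow_lt_zpow_right₀ hp1 (by omega)
  have hwx : ‖w‖ < ‖x‖ := hx ▸ lt_of_le_of_lt hwn hlt
  have hnorm : ‖x + w‖ = (p : ℝ) ^ (α : ℤ) := by
    rw [← hx]
    refine le_antisymm (le_trans (aux_ult p x w) (max_le le_rfl hwx.le)) ?_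
    have h2 := aux_ult p (x + w) (-w)
    simp only [add_neg_cancel_right, norm_neg] at h2
    rcases max_cases ‖x + w‖ ‖w‖ with ⟨he, _⟩ | ⟨he, _⟩
    · rwa [he] at h2
    · rw [he] at h2; exact absurd (lt_of_le_of_lt h2 hwx) (lt_irrefl _)
  refine ⟨hnorm, ?_⟩
  -- scaled points
  set c : ℚ_[p] := (p : ℚ_[p]) ^ α with hc_def
  have hcn : ‖c‖ = (p : ℝ) ^ (-(α : ℤ)) := by
    rw [hc_def, norm_pow, Padic.norm_p, inv_pow, ← zpow_natCast, ← zpow_neg]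
  have hcu : ∀ i, ‖c * x i‖ ≤ 1 := by
    intro i
    rw [norm_mul, hcn]
    calc (p : ℝ) ^ (-(α : ℤ)) * ‖x i‖ ≤ (p : ℝ) ^ (-(α : ℤ)) * (p : ℝ) ^ (α : ℤ) := by
          refine mul_le_mul_of_nonneg_left ?_ (by positivity)
          exact hx ▸ norm_le_pi_norm x i
      _ = 1 := by rw [← zpow_add₀ (ne_of_gt hp0), neg_add_cancel, zpow_zero]
  have hcv : ∀ i, ‖c * (x + w) i - c * x i‖ ≤ (p : ℝ) ^ (-(β : ℤ)) := by
    intro i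
    have : c * (x + w) i - c * x i = c * w i := by simp [Pi.add_apply]; ring
    rw [this, norm_mul, hcn]
    calc (p : ℝ) ^ (-(α : ℤ)) * ‖w i‖ ≤ (p : ℝ) ^ (-(α : ℤ)) * (p : ℝ) ^ ((α : ℤ) - β) :=
          mul_le_mul_of_nonneg_left (hw i) (by positivity)
      _ = (p : ℝ) ^ (-(β : ℤ)) := by rw [← zpow_add₀ (ne_of_gt hp0)]; ring_nf
  have hr0 : (0 : ℝ) ≤ (p : ℝ) ^ (-(β : ℤ)) := by positivity
  have hr1 : (p : ℝ) ^ (-(β : ℤ)) ≤ 1 := by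
    calc (p : ℝ) ^ (-(β : ℤ)) ≤ (p : ℝ) ^ (0 : ℤ) :=
          zpow_le_zpow_right₀ hp1.le (by omega)
      _ = 1 := zpow_zero _
  obtain ⟨-, hdiff⟩ := aux_diff p f ((p : ℝ) ^ (-(β : ℤ))) hr0 hr1
    (fun i => c * x i) (fun i => c * (x + w) i) hcu hcv
  have hFhom : (map (Int.castRingHom ℚ_[p]) f).IsHomogeneous d := hf.map _
  rw [aux_eval_scale hFhom c (x + w), aux_eval_scale hFhom c x, ← mul_sub, norm_mul,
    norm_pow, hcn] at hdiff
  have hcd : ((p : ℝ) ^ (-(α : ℤ))) ^ d = (p : ℝ) ^ (-(d * α : ℤ)) := by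
    rw [← zpow_natCast (((p:ℝ)) ^ (-(α : ℤ))) d, ← zpow_mul]
    congr 1; push_cast; ring
  rw [hcd] at hdiff
  have hdiff2 : ‖eval (x + w) (map (Int.castRingHom ℚ_[p]) f)
      - eval x (map (Int.castRingHom ℚ_[p]) f)‖ ≤ (p : ℝ) ^ ((d * α : ℤ) - β) := by
    have h3 : (p : ℝ) ^ ((d * α : ℤ)) * ((p : ℝ) ^ (-(d * α : ℤ)) *
        ‖eval (x + w) (map (Int.castRingHom ℚ_[p]) f)
          - eval x (map (Int.castRingHom ℚ_[p]) f)‖) ≤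
        (p : ℝ) ^ ((d * α : ℤ)) * (p : ℝ) ^ (-(β : ℤ)) :=
      mul_le_mul_of_nonneg_left hdiff (by positivity)
    rw [← mul_assoc, ← zpow_add₀ (ne_of_gt hp0), add_neg_cancel, zpow_zero, one_mul,
      ← zpow_add₀ (ne_of_gt hp0)] at h3
    exact h3.trans_eq (by rw [← sub_eq_add_neg])
  have : eval (x + w) (map (Int.castRingHom ℚ_[p]) f) = eval x (map (Int.castRingHom ℚ_[p]) f)
      + (eval (x + w) (map (Int.castRingHom ℚ_[p]) f) - eval x (map (Int.castRingHom ℚ_[p]) f)) := by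
    ring
  rw [this]
  exact le_trans (Padic.nonarchimedean _ _) (max_le hfx hdiff2)


/-- with `Z_f` and `Z_{f,a}` smooth over `ℤ_p` and `a ∈ ℤⁿ \ pℤⁿ`, the
integral `I(α,β)` of `ψ_a` over `{x ∈ ℚ_pⁿ : ‖x‖ = p^α, |f(x)| ≤ p^{dα-β}}` vanishes
whenever `1 ≤ β < α`. -/
theorem stmt_17 (p : ℕ) [hp : Fact p.Prime] (n d : ℕ) (hn : 3 ≤ n) (hd : 1 ≤ d)
    [MeasurableSpace (Fin n → ℚ_[p])] [BorelSpace (Fin n → ℚ_[p])]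
    (μ : Measure (Fin n → ℚ_[p])) [μ.IsAddHaarMeasure]
    (hμ : μ {x : Fin n → ℚ_[p] | ∀ i, ‖x i‖ ≤ 1} = 1)
    (ψ : AddChar ℚ_[p] ℂ) (hcont : Continuous ψ)
    (htriv : ∀ x : ℚ_[p], ‖x‖ ≤ 1 → ψ x = 1)
    (hnontriv : ∃ y : ℚ_[p], ‖y‖ ≤ p ∧ ψ y ≠ 1)
    (f : MvPolynomial (Fin n) ℤ) (hf : f.IsHomogeneous d)
    (a : Fin n → ℤ) (ha : ¬ ∀ i, (p : ℤ) ∣ a i)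
    -- smoothness of `Z_f` over `ℤ_p`:
    (hsmooth : ∀ x : Fin n → ZMod p, x ≠ 0 →
      eval x (map (Int.castRingHom (ZMod p)) f) = 0 →
      ∃ i, eval x (pderiv i (map (Int.castRingHom (ZMod p)) f)) ≠ 0)
    -- smoothness of `Z_{f,a}` over `ℤ_p`:
    (hsmooth' : ∀ x : Fin n → ZMod p, x ≠ 0 →
      eval x (map (Int.castRingHom (ZMod p)) f) = 0 →
      (∑ i, (a i : ZMod p) * x i) = 0 →
      ¬ ∃ c : ZMod p, ∀ i,
        eval x (pderiv i (map (Int.castRingHom (ZMod p)) f)) = c * (a i : ZMod p))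
    (α β : ℕ) (hβ : 1 ≤ β) (hβα : β < α) :
    ∫ x in {x : Fin n → ℚ_[p] | ‖x‖ = (p : ℝ) ^ (α : ℤ) ∧
        ‖eval x (map (Int.castRingHom ℚ_[p]) f)‖ ≤ (p : ℝ) ^ ((d * α : ℤ) - β)},
      ψ (∑ i, (a i : ℚ_[p]) * x i) ∂μ = 0 := by
  classical
  have hp1 : (1 : ℝ) < (p : ℝ) := by exact_mod_cast hp.out.one_lt
  have hp0 : (0 : ℝ) < (p : ℝ) := lt_trans one_pos hp1
  push_neg at ha
  obtain ⟨i0, hi0⟩ := ha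
  obtain ⟨y, hy, hyψ⟩ := hnontriv
  have hai : ‖((a i0 : ℤ) : ℚ_[p])‖ = 1 := by
    refine le_antisymm (Padic.norm_int_le_one _) ?_
    by_contra h
    push_neg at h
    exact hi0 (Padic.norm_intCast_lt_one_iff.mp h)
  have hane : ((a i0 : ℤ) : ℚ_[p]) ≠ 0 := by
    intro h; rw [h, norm_zero] at hai; norm_num at hai
  set t : ℚ_[p] := ((a i0 : ℤ) : ℚ_[p])⁻¹ * y with ht_def
  have hat : ((a i0 : ℤ) : ℚ_[p]) * t = y := by
    rw [ht_def, ← mul_assoc, mul_inv_cancel₀ hane, one_mul]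
  have htn : ‖t‖ ≤ (p : ℝ) := by
    rw [ht_def, norm_mul, norm_inv, hai]; simpa using hy
  set z : Fin n → ℚ_[p] := fun i => if i = i0 then t else 0 with hz_def
  have hzb : ∀ i, ‖z i‖ ≤ (p : ℝ) ^ ((α : ℤ) - β) := by
    intro i
    have hple : (p : ℝ) ≤ (p : ℝ) ^ ((α : ℤ) - β) := by
      calc (p : ℝ) = (p : ℝ) ^ (1 : ℤ) := (zpow_one _).symm
        _ ≤ _ := zpow_le_zpow_right₀ hp1.le (by omega)
    by_cases hi : i = i0
    · simp only [hz_def, hi, if_pos rfl]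
      exact le_trans htn hple
    · simp only [hz_def, if_neg hi, norm_zero]
      positivity
  set S : Set (Fin n → ℚ_[p]) := {x : Fin n → ℚ_[p] | ‖x‖ = (p : ℝ) ^ (α : ℤ) ∧
      ‖eval x (map (Int.castRingHom ℚ_[p]) f)‖ ≤ (p : ℝ) ^ ((d * α : ℤ) - β)} with hS_def
  have hinv : (fun x : Fin n → ℚ_[p] => x + z) ⁻¹' S = S := by
    ext x
    simp only [Set.mem_preimage, hS_def, Set.mem_setOf_eq]
    constructor
    · intro hxz
      have hzb' : ∀ i, ‖(-z) i‖ ≤ (p : ℝ) ^ ((α : ℤ) - β) := by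
        intro i; simpa using hzb i
      have := aux_step p f hf α β hβ hβα (x + z) (-z) hzb' hxz.1 hxz.2
      simpa using this
    · intro hx
      exact aux_step p f hf α β hβ hβα x z hzb hx.1 hx.2
  have hmp : MeasurePreserving (fun x : Fin n → ℚ_[p] => x + z) μ μ :=
    measurePreserving_add_right μ z
  have hemb : MeasurableEmbedding (fun x : Fin n → ℚ_[p] => x + z) :=
    (MeasurableEquiv.addRight z).measurableEmbedding
  have h1 := hmp.setIntegral_preimage_emb hemb
    (fun x : Fin n → ℚ_[p] => ψ (∑ i, (a i : ℚ_[p]) * x i)) S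
  rw [hinv] at h1
  have h2 : ∀ x : Fin n → ℚ_[p],
      ψ (∑ i, (a i : ℚ_[p]) * (x + z) i) = ψ y * ψ (∑ i, (a i : ℚ_[p]) * x i) := by
    intro x
    have hsum : ∑ i, (a i : ℚ_[p]) * (x + z) i = (∑ i, (a i : ℚ_[p]) * x i) + y := by
      have : ∀ i, (a i : ℚ_[p]) * (x + z) i = (a i : ℚ_[p]) * x i + (a i : ℚ_[p]) * z i := by
        intro i; simp [Pi.add_apply]; ring
      rw [Finset.sum_congr rfl fun i _ => this i, Finset.sum_add_distrib]
      congr 1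
      rw [show ∑ i, (a i : ℚ_[p]) * z i = ((a i0 : ℤ) : ℚ_[p]) * t from ?_, hat]
      rw [hz_def]
      simp [mul_ite, mul_zero, Finset.sum_ite_eq']
    rw [hsum, AddChar.map_add_eq_mul]
    ring
  simp only [h2] at h1
  rw [integral_const_mul] at h1
  have hfin : (ψ y - 1) * ∫ x in S, ψ (∑ i, (a i : ℚ_[p]) * x i) ∂μ = 0 := by
    rw [sub_mul, one_mul, h1, sub_self]
  rcases mul_eq_zero.mp hfin with h | h
  · exact absurd (by linear_combination h : ψ y = 1) hyψ
  · exact h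
end
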